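/- arXiv:2205.14622 — 7 statements merged into one kernel-verified Lean document; each statement's English description precedes it below -/
import Mathlib

section
/- Let G be an n̄×y matrix and F an n̄×x matrix over a finite field 𝔽_q, and let B ⊆ {1,…,n̄}. Then the distribution of P_B(Fm+GU) with U uniform on 𝔽_q^y is the same for every m ∈ 𝔽_q^x — i.e., for all m,m' ∈ 𝔽_q^x and all z ∈ 𝔽_q^{|B|}, the number of u ∈ 𝔽_q^y with P_B(Fm+Gu) = z equals the number of u with P_B(Fm'+Gu) = z — if and only if every column of P_B F lies in the column span of P_B G. -/
/-!
Both sides reduce to `P_B F m - P_B F m' ∈ range (P_B G)` for all `m, m'`. If `P_B F m - P_B F m'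
= P_B G u₀`, translating `u` by `u₀` matches the two fibres over every `z`; conversely, the fibre
of `u ↦ P_B F m + P_B G u` over `P_B F m` contains `u = 0`, so the fibre of
`u ↦ P_B F m' + P_B G u` over the same point is nonempty as well.
-/

open Matrix

/-- The column span of a matrix, as a submodule of the space of column vectors. -/
def colSpan {K : Type*} [Field K] {ι ν : Type*} (M : Matrix ι ν K) : Submodule K (ι → K) :=
  Submodule.span K (Set.range fun j : ν => fun i : ι => M i j)

/-- The row submatrix of `M` consisting of the rows indexed by the finite set `S`
(the projection `P_S M`). -/
def rowRestrict {K : Type*} {ι ν : Type*} (S : Finset ι) (M : Matrix ι ν K) :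
    Matrix {i // i ∈ S} ν K :=
  Matrix.of fun i j => M i.1 j

theorem colSpan_eq_range_mulVecLin {K : Type*} [Field K] {ι ν : Type*} [Fintype ν]
    [DecidableEq ν] (M : Matrix ι ν K) : colSpan M = LinearMap.range M.mulVecLin := by
  rw [Matrix.range_mulVecLin]
  rfl

theorem colSpan_le_iff {K : Type*} [Field K] {ι ν : Type*} (M : Matrix ι ν K)
    (p : Submodule K (ι → K)) : colSpan M ≤ p ↔ ∀ j, (fun i => M i j) ∈ p := by
  rw [colSpan, Submodule.span_le, Set.range_subset_iff]
  rfl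

theorem rowRestrict_mulVec {K : Type*} [NonUnitalNonAssocSemiring K] {ι ν : Type*} [Fintype ν]
    (S : Finset ι) (M : Matrix ι ν K) (v : ν → K) :
    rowRestrict S M *ᵥ v = fun i : {i // i ∈ S} => (M *ᵥ v) i.1 :=
  rfl

theorem card_translate_fiber_eq_iff {U W : Type*} [AddGroup U] [AddGroup W] [Finite U]
    (g : U →+ W) (a b : W) :
    (∀ z, Nat.card {u // a + g u = z} = Nat.card {u // b + g u = z}) ↔ -b + a ∈ Set.range g := by
  constructor
  · intro h
    have hpos : 0 < Nat.card {u // b + g u = a} := by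
      rw [← h a]
      exact Nat.card_pos_iff.mpr ⟨⟨⟨0, by simp⟩⟩, inferInstance⟩
    obtain ⟨⟨u, hu⟩⟩ := (Nat.card_pos_iff.mp hpos).1
    exact ⟨u, by rw [← hu, neg_add_cancel_left]⟩
  · rintro ⟨u₀, hu₀⟩ z
    refine Nat.card_congr (Equiv.subtypeEquiv (Equiv.addLeft u₀) fun u => ?_)
    rw [Equiv.coe_addLeft, map_add, hu₀, ← add_assoc, add_neg_cancel_left]

theorem card_translate_fiber_eq_iff_range_le {R U V W : Type*} [Ring R] [AddCommGroup U]
    [AddCommGroup V] [AddCommGroup W] [Module R U] [Module R V] [Module R W] [Finite U]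
    (f : V →ₗ[R] W) (g : U →ₗ[R] W) :
    (∀ m m' z, Nat.card {u // f m + g u = z} = Nat.card {u // f m' + g u = z}) ↔
      LinearMap.range f ≤ LinearMap.range g := by
  have hfibre (m m') := card_translate_fiber_eq_iff g.toAddMonoidHom (f m) (f m')
  simp only [LinearMap.toAddMonoidHom_coe, ← map_neg, ← map_add, ← LinearMap.coe_range,
    SetLike.mem_coe] at hfibre
  simp_rw [hfibre, LinearMap.range_le_iff_comap, Submodule.eq_top_iff', Submodule.mem_comap]
  constructor
  · intro h m
    simpa using h 0 m
  · intro h m m'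
    rw [map_add]
    exact (LinearMap.range g).add_mem (h (-m')) (h m)

/-- the distribution of `P_B(Fm + GU)`, with `U` uniform on `𝔽_q^y`,
is the same for every `m` iff every column of `P_B F` lies in the column span
of `P_B G`. -/
theorem stmt5 {K : Type*} [Field K] [Fintype K] {nb y x : ℕ}
    (G : Matrix (Fin nb) (Fin y) K) (F : Matrix (Fin nb) (Fin x) K) (B : Finset (Fin nb)) :
    (∀ (m m' : Fin x → K) (z : {i // i ∈ B} → K),
        Nat.card {u : Fin y → K //
            (fun i : {i // i ∈ B} => (F.mulVec m + G.mulVec u) i.1) = z}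
          = Nat.card {u : Fin y → K //
            (fun i : {i // i ∈ B} => (F.mulVec m' + G.mulVec u) i.1) = z})
      ↔
    (∀ j : Fin x, (fun i : {i // i ∈ B} => F i.1 j) ∈ colSpan (rowRestrict B G)) := by
  have hcard := card_translate_fiber_eq_iff_range_le (rowRestrict B F).mulVecLin
    (rowRestrict B G).mulVecLin
  simp only [mulVecLin_apply, rowRestrict_mulVec, ← colSpan_eq_range_mulVecLin] at hcard
  exact hcard.trans (colSpan_le_iff _ _)
end

section
/- Let n̄ ≥ r > t > 0 be integers. An n̄×(t+(r−t)) matrix (G,F) over a finite field 𝔽_q, with G of size n̄×t and F of size n̄×(r−t), is an (r,t,n̄)-MMSP if and only if the matrix (G,F) is an (n̄,r)-MDS code and the matrix G is an (n̄,t)-MDS code. -/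
open Matrix

/-- A matrix `M` is an `(m, k)`-MDS code if any `k` of its rows are
linearly independent. -/
def IsMDS {K : Type*} [Field K] {ι ν : Type*} (k : ℕ) (M : Matrix ι ν K) : Prop :=
  ∀ A : Finset ι, A.card = k → LinearIndependent K fun i : {i // i ∈ A} => M i.1

section Helpers

open Submodule Module

variable {K : Type*} [Field K]

lemma mem_colSpan_iff {ι ν : Type*} [Fintype ν] (M : Matrix ι ν K) (v : ι → K) :
    v ∈ colSpan M ↔ ∃ x : ν → K, M *ᵥ x = v := by
  rw [colSpan, mem_span_range_iff_exists_fun]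
  refine exists_congr fun c => ?_
  constructor
  · intro hc; ext i; rw [← hc]; simp [mulVec, dotProduct, mul_comm]
  · intro hc; ext i; rw [← hc]; simp [mulVec, dotProduct, mul_comm]

lemma rowRestrict_mulVec_apply {ι ν : Type*} [Fintype ν] (S : Finset ι) (M : Matrix ι ν K)
    (x : ν → K) (i : {i // i ∈ S}) : (rowRestrict S M *ᵥ x) i = ∑ j, M i.1 j * x j := rfl

lemma mulVec_surj_of_rows_li {m ν : Type*} [Fintype m] [Fintype ν] (M : Matrix m ν K)
    (h : LinearIndependent K (fun i => M i)) (v : m → K) : ∃ x, M *ᵥ x = v := by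
  have hr : M.rank = Fintype.card m := h.rank_matrix
  have htop : LinearMap.range M.mulVecLin = ⊤ := by
    apply Submodule.eq_top_of_finrank_eq
    rw [show finrank K ↥(LinearMap.range M.mulVecLin) = M.rank from rfl, hr, Module.finrank_pi]
  obtain ⟨x, hx⟩ := LinearMap.range_eq_top.mp htop v
  exact ⟨x, hx⟩

lemma rows_li_of_mulVec_inj {m ν : Type*} [Fintype m] [Fintype ν] (M : Matrix m ν K)
    (hc : Fintype.card m = Fintype.card ν)
    (h : ∀ x, M *ᵥ x = 0 → x = 0) : LinearIndependent K (fun i => M i) := by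
  have hinj : Function.Injective M.mulVecLin := by
    rw [← LinearMap.ker_eq_bot]
    exact LinearMap.ker_eq_bot'.mpr fun x hx => h x hx
  have h1 : M.rank = Fintype.card ν := by
    rw [show M.rank = finrank K ↥(LinearMap.range M.mulVecLin) from rfl,
      LinearMap.finrank_range_of_inj hinj, Module.finrank_pi]
  rw [linearIndependent_iff_card_eq_finrank_span, Set.finrank, hc, ← h1]
  exact M.rank_eq_finrank_span_row

lemma mulVec_inj_of_rows_li {m ν : Type*} [Fintype m] [Fintype ν] (M : Matrix m ν K)
    (hc : Fintype.card m = Fintype.card ν)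
    (h : LinearIndependent K (fun i => M i)) : ∀ x, M *ᵥ x = 0 → x = 0 := by
  have hr : M.rank = Fintype.card m := h.rank_matrix
  have hker : LinearMap.ker M.mulVecLin = ⊥ := by
    have h3 := LinearMap.finrank_range_add_finrank_ker M.mulVecLin
    rw [show finrank K ↥(LinearMap.range M.mulVecLin) = M.rank from rfl, hr, Module.finrank_pi,
      hc] at h3
    exact Submodule.finrank_eq_zero.mp (by omega)
  intro x hx
  have hx' : x ∈ LinearMap.ker M.mulVecLin := hx
  rw [hker, Submodule.mem_bot] at hx'
  exact hx'

lemma mkQ_li_iff {ι' : Type*} [Fintype ι'] {V : Type*} [AddCommGroup V] [Module K V]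
    (N : Submodule K V) (v : ι' → V) :
    (LinearIndependent K fun j => N.mkQ (v j)) ↔
      ∀ c : ι' → K, (∑ j, c j • v j) ∈ N → c = 0 := by
  rw [Fintype.linearIndependent_iff]
  constructor
  · intro h c hc
    funext j
    refine h c ?_ j
    have heq : ∑ i, c i • N.mkQ (v i) = N.mkQ (∑ j, c j • v j) := by
      rw [map_sum]
      exact Finset.sum_congr rfl fun i _ => (_root_.map_smul _ _ _).symm
    rw [heq, Submodule.mkQ_apply, Submodule.Quotient.mk_eq_zero]
    exact hc
  · intro h c hc j
    have heq : ∑ i, c i • N.mkQ (v i) = N.mkQ (∑ j, c j • v j) := by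
      rw [map_sum]
      exact Finset.sum_congr rfl fun i _ => (_root_.map_smul _ _ _).symm
    rw [heq, Submodule.mkQ_apply, Submodule.Quotient.mk_eq_zero] at hc
    exact congr_fun (h c hc) j

end Helpers

/-- an `n̄×(t+(r−t))` matrix `(G,F)` is an `(r,t,n̄)`-MMSP iff
`(G,F)` is an `(n̄,r)`-MDS code and `G` is an `(n̄,t)`-MDS code. -/
theorem stmt6 {K : Type*} [Field K] [Fintype K] {nb r t : ℕ}
    (ht : 0 < t) (htr : t < r) (hrn : r ≤ nb)
    (G : Matrix (Fin nb) (Fin t) K) (F : Matrix (Fin nb) (Fin (r - t)) K) :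
    ((∀ A : Finset (Fin nb), r ≤ A.card →
        LinearIndependent K fun j : Fin (r - t) =>
          (colSpan (rowRestrict A G)).mkQ fun i : {i // i ∈ A} => F i.1 j) ∧
     (∀ B : Finset (Fin nb), B.card ≤ t → ∀ j : Fin (r - t),
        (fun i : {i // i ∈ B} => F i.1 j) ∈ colSpan (rowRestrict B G)))
      ↔
    (IsMDS r (Matrix.fromCols G F) ∧ IsMDS t G) := by
  classical
  have hcardSum : Fintype.card (Fin t ⊕ Fin (r - t)) = r := by
    simp [Nat.add_sub_cancel' htr.le]
  have hA1iff : ∀ A : Finset (Fin nb),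
      (LinearIndependent K fun j : Fin (r - t) =>
        (colSpan (rowRestrict A G)).mkQ fun i : {i // i ∈ A} => F i.1 j) ↔
      ∀ y : Fin (r - t) → K, rowRestrict A F *ᵥ y ∈ colSpan (rowRestrict A G) → y = 0 := by
    intro A
    rw [mkQ_li_iff]
    refine forall_congr' fun y => ?_
    have hs : ∑ j, y j • (fun i : {i // i ∈ A} => F i.1 j) = rowRestrict A F *ᵥ y := by
      ext i
      simp [Finset.sum_apply, mulVec, dotProduct, rowRestrict, mul_comm]
    rw [hs]
  constructor
  · rintro ⟨h1, h2⟩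
    have h1' : ∀ A : Finset (Fin nb), r ≤ A.card →
        ∀ y : Fin (r - t) → K, rowRestrict A F *ᵥ y ∈ colSpan (rowRestrict A G) → y = 0 :=
      fun A hA => (hA1iff A).mp (h1 A hA)
    have h2' : ∀ B : Finset (Fin nb), B.card ≤ t → ∀ j, ∃ x : Fin t → K,
        rowRestrict B G *ᵥ x = fun i : {i // i ∈ B} => F i.1 j :=
      fun B hB j => (mem_colSpan_iff _ _).mp (h2 B hB j)
    -- Key lemma: for every A with r ≤ |A|, the columns of P_A G are linearly independent.
    have keyL : ∀ A : Finset (Fin nb), r ≤ A.card →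
        ∀ x : Fin t → K, rowRestrict A G *ᵥ x = 0 → x = 0 := by
      intro A hA x hx
      by_contra hx0
      obtain ⟨k₀, hk₀⟩ := Function.ne_iff.mp hx0
      let φ : (Fin t → K) →ₗ[K] K :=
        { toFun := fun v => ∑ k, v k * x k
          map_add' := fun u v => by simp [add_mul, Finset.sum_add_distrib]
          map_smul' := fun a v => by simp [Finset.mul_sum, mul_assoc] }
      have hφrow : ∀ a ∈ A, φ (G a) = 0 := by
        intro a ha
        have h0 := congr_fun hx ⟨a, ha⟩
        simpa [φ, rowRestrict, mulVec, dotProduct] using h0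
      have hφ0 : φ ≠ 0 := by
        intro h0
        have h1 : φ (Pi.single k₀ 1) = 0 := by rw [h0]; rfl
        have h2 : φ (Pi.single k₀ 1) = x k₀ := by
          simp [φ, Pi.single_apply, Finset.sum_ite_eq']
        rw [h2] at h1
        exact hk₀ (by simpa using h1)
      set s : Fin nb → (Fin t → K) := fun i => if i ∈ A then G i else 0 with hs
      obtain ⟨I, hIli, hIspan⟩ := exists_maximal_linearIndepOn K s
      replace hIli : LinearIndependent K (fun i : I => s i) := hIli
      have hIA : ∀ i ∈ I, i ∈ A := by
        intro i hi
        by_contra hiA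
        exact hIli.ne_zero ⟨i, hi⟩ (by simp [s, hiA])
      let B : Finset (Fin nb) := (Set.toFinite I).toFinset
      have hmemB : ∀ i, i ∈ B ↔ i ∈ I := fun i => Set.Finite.mem_toFinset _
      have hBA : B ⊆ A := fun i hi => hIA i ((hmemB i).mp hi)
      have hBli : LinearIndependent K fun b : {i // i ∈ B} => G b.1 := by
        have he : ∀ b : {i // i ∈ B}, b.1 ∈ I := fun b => (hmemB b.1).mp b.2
        have hcomp := hIli.comp (fun b : {i // i ∈ B} => (⟨b.1, he b⟩ : I))
          (by intro b b' hbb'; have h := congrArg Subtype.val hbb'; exact Subtype.ext h)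
        convert hcomp using 1
        funext b
        simp [Function.comp, s, hIA b.1 (he b)]
        all_goals rfl
      have hcardB : B.card + 1 ≤ t := by
        have hker : ∀ b : {i // i ∈ B}, G b.1 ∈ LinearMap.ker φ :=
          fun b => LinearMap.mem_ker.mpr (hφrow b.1 (hBA b.2))
        have hli2 : LinearIndependent K fun b : {i // i ∈ B} =>
            (⟨G b.1, hker b⟩ : LinearMap.ker φ) :=
          LinearIndependent.of_comp (LinearMap.ker φ).subtype (by exact hBli)
        have hcle := hli2.fintype_card_le_finrank
        rw [Fintype.card_coe] at hcle
        have hfr : Module.finrank K (LinearMap.ker φ) + 1 = t := by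
          have hd := Module.Dual.finrank_ker_add_one_of_ne_zero (f := φ) hφ0
          rwa [Module.finrank_fin_fun] at hd
        omega
      have hspan : ∀ a ∈ A, ∃ c : {i // i ∈ B} → K, ∑ b, c b • G b.1 = G a := by
        intro a ha
        have himg : s '' I = Set.range fun b : {i // i ∈ B} => G b.1 := by
          ext v
          constructor
          · rintro ⟨i, hi, rfl⟩
            exact ⟨⟨i, (hmemB i).mpr hi⟩, by simp [s, hIA i hi]⟩
          · rintro ⟨b, rfl⟩
            exact ⟨b.1, (hmemB b.1).mp b.2, by simp [s, hBA b.2]⟩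
        have hmem : G a ∈ Submodule.span K (s '' I) := by
          by_cases haI : a ∈ I
          · exact Submodule.subset_span ⟨a, haI, by simp [s, ha]⟩
          · obtain ⟨lam, hlam0, hlam⟩ := hIspan a haI
            have hsa : s a = G a := by simp [s, ha]
            rw [hsa] at hlam
            have hrw : G a = lam⁻¹ • (lam • G a) := by
              rw [smul_smul, inv_mul_cancel₀ hlam0, one_smul]
            rw [hrw]
            exact Submodule.smul_mem _ _ hlam
        rw [himg, Submodule.mem_span_range_iff_exists_fun] at hmem
        exact hmem
      have hkey : ∀ (a : Fin nb) (c : {i // i ∈ B} → K), (∑ b, c b • G b.1 = G a) →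
          ∀ z : Fin t → K, ∑ k, G a k * z k = ∑ b, c b * ∑ k, G b.1 k * z k := by
        intro a c hc z
        rw [← hc]
        simp only [Finset.sum_apply, Pi.smul_apply, smul_eq_mul, Finset.sum_mul]
        rw [Finset.sum_comm]
        simp [Finset.mul_sum, mul_assoc]
      have relF : ∀ a ∈ A, ∀ c : {i // i ∈ B} → K, (∑ b, c b • G b.1 = G a) →
          ∀ j, F a j = ∑ b, c b * F b.1 j := by
        intro a ha c hc j
        obtain ⟨xj, hxj⟩ := h2' (insert a B) (le_trans (Finset.card_insert_le a B) hcardB) j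
        have ha' : ∑ k, G a k * xj k = F a j := by
          have h0 := congr_fun hxj ⟨a, Finset.mem_insert_self a B⟩
          simpa [rowRestrict, mulVec, dotProduct] using h0
        have hb' : ∀ b : {i // i ∈ B}, ∑ k, G b.1 k * xj k = F b.1 j := by
          intro b
          have h0 := congr_fun hxj ⟨b.1, Finset.mem_insert_of_mem b.2⟩
          simpa [rowRestrict, mulVec, dotProduct] using h0
        rw [← ha', hkey a c hc xj]
        exact Finset.sum_congr rfl fun b _ => by rw [hb']
      have h0rt : 0 < r - t := by omega
      let j₀ : Fin (r - t) := ⟨0, h0rt⟩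
      obtain ⟨x', hx'⟩ := mulVec_surj_of_rows_li (rowRestrict B G) (by exact hBli)
        (fun b : {i // i ∈ B} => F b.1 j₀)
      have hb'' : ∀ b : {i // i ∈ B}, ∑ k, G b.1 k * x' k = F b.1 j₀ := by
        intro b
        have h0 := congr_fun hx' b
        simpa [rowRestrict, mulVec, dotProduct] using h0
      have hmemF : (fun i : {i // i ∈ A} => F i.1 j₀) ∈ colSpan (rowRestrict A G) := by
        rw [mem_colSpan_iff]
        refine ⟨x', ?_⟩
        funext i
        obtain ⟨c, hc⟩ := hspan i.1 i.2
        rw [rowRestrict_mulVec_apply, hkey i.1 c hc x']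
        rw [show ∑ b, c b * ∑ k, G b.1 k * x' k = ∑ b, c b * F b.1 j₀ from
          Finset.sum_congr rfl fun b _ => by rw [hb'' b]]
        exact (relF i.1 i.2 c hc j₀).symm
      have hsingle : rowRestrict A F *ᵥ Pi.single j₀ 1 = fun i : {i // i ∈ A} => F i.1 j₀ := by
        funext i
        rw [rowRestrict_mulVec_apply]
        simp [Pi.single_apply, Finset.sum_ite_eq']
      have hyy := h1' A hA (Pi.single j₀ 1) (by rw [hsingle]; exact hmemF)
      simpa using congr_fun hyy j₀
    -- (G,F) is (nb, r)-MDS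
    have hWMDS : IsMDS r (Matrix.fromCols G F) := by
      intro A hAcard
      have hcard' : Fintype.card {i // i ∈ A} = Fintype.card (Fin t ⊕ Fin (r - t)) := by
        rw [Fintype.card_coe, hAcard, hcardSum]
      have hinj : ∀ z : (Fin t ⊕ Fin (r - t)) → K,
          rowRestrict A (Matrix.fromCols G F) *ᵥ z = 0 → z = 0 := by
        intro z hz
        have hsplit : ∀ i : {i // i ∈ A},
            ∑ k, G i.1 k * z (Sum.inl k) + ∑ j, F i.1 j * z (Sum.inr j) = 0 := by
          intro i
          have h0 := congr_fun hz i
          rw [rowRestrict_mulVec_apply, Fintype.sum_sum_type] at h0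
          simpa using h0
        have hy : (fun j => z (Sum.inr j)) = 0 := by
          apply h1' A (le_of_eq hAcard.symm)
          rw [mem_colSpan_iff]
          refine ⟨fun k => -(z (Sum.inl k)), ?_⟩
          funext i
          rw [rowRestrict_mulVec_apply, rowRestrict_mulVec_apply]
          simp only [mul_neg]
          rw [Finset.sum_neg_distrib]
          linear_combination -hsplit i
        have hxz : (fun k => z (Sum.inl k)) = 0 := by
          apply keyL A (le_of_eq hAcard.symm)
          funext i
          rw [rowRestrict_mulVec_apply]
          have h0 := hsplit i
          have hz0 : ∀ j, z (Sum.inr j) = 0 := fun j => congr_fun hy j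
          simp only [hz0, mul_zero, Finset.sum_const_zero, add_zero] at h0
          simpa using h0
        funext p
        cases p with
        | inl k => exact congr_fun hxz k
        | inr j => exact congr_fun hy j
      exact rows_li_of_mulVec_inj (rowRestrict A (Matrix.fromCols G F)) hcard' hinj
    refine ⟨hWMDS, ?_⟩
    -- G is (nb, t)-MDS
    intro B hBcard
    by_contra hdep
    rw [Fintype.not_linearIndependent_iff] at hdep
    obtain ⟨w, hw, i₀, hi₀⟩ := hdep
    have hwk : ∀ k, ∑ i : {i // i ∈ B}, w i * G i.1 k = 0 := by
      intro k
      have h0 := congr_fun hw k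
      simpa [Finset.sum_apply] using h0
    have hFrel : ∀ j, ∑ i : {i // i ∈ B}, w i * F i.1 j = 0 := by
      intro j
      obtain ⟨xj, hxj⟩ := h2' B (le_of_eq hBcard) j
      have hb' : ∀ b : {i // i ∈ B}, F b.1 j = ∑ k, G b.1 k * xj k := by
        intro b
        have h0 := congr_fun hxj b
        rw [rowRestrict_mulVec_apply] at h0
        exact h0.symm
      calc ∑ i : {i // i ∈ B}, w i * F i.1 j
          = ∑ i : {i // i ∈ B}, w i * ∑ k, G i.1 k * xj k :=
            Finset.sum_congr rfl fun i _ => by rw [hb' i]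
        _ = ∑ k, (∑ i : {i // i ∈ B}, w i * G i.1 k) * xj k := by
            simp only [Finset.mul_sum, Finset.sum_mul, mul_assoc]
            rw [Finset.sum_comm]
        _ = 0 := by simp only [hwk, zero_mul, Finset.sum_const_zero]
    obtain ⟨A, hBA, hAcard⟩ := Finset.exists_superset_card_eq
      (le_trans (le_of_eq hBcard) htr.le) (by simpa using hrn)
    have hWli := hWMDS A hAcard
    rw [Fintype.linearIndependent_iff] at hWli
    have hrowsum : ∑ i : {i // i ∈ B}, w i • (fun p => Matrix.fromCols G F i.1 p) = 0 := by
      funext p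
      rw [Finset.sum_apply]
      cases p with
      | inl k => simpa [Matrix.fromCols] using hwk k
      | inr j => simpa [Matrix.fromCols] using hFrel j
    let g : Fin nb → ((Fin t ⊕ Fin (r - t)) → K) :=
      fun a => (if h : a ∈ B then w ⟨a, h⟩ else 0) • (fun p => Matrix.fromCols G F a p)
    have hgsum : ∑ i : {i // i ∈ A}, g i.1 = 0 := by
      calc ∑ i : {i // i ∈ A}, g i.1 = ∑ a ∈ A, g a := by
            rw [Finset.univ_eq_attach]; exact Finset.sum_attach A g
        _ = ∑ a ∈ B, g a :=
            (Finset.sum_subset hBA (fun a _ haB => by simp [g, haB])).symm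
        _ = ∑ i : {i // i ∈ B}, g i.1 := by
            rw [Finset.univ_eq_attach]; exact (Finset.sum_attach B g).symm
        _ = ∑ i : {i // i ∈ B}, w i • (fun p => Matrix.fromCols G F i.1 p) :=
            Finset.sum_congr rfl fun i _ => by simp [g, i.2]
        _ = 0 := hrowsum
    have hall := hWli (fun i : {i // i ∈ A} => if h : i.1 ∈ B then w ⟨i.1, h⟩ else 0)
      (by exact hgsum)
    have hzero : (if h : (i₀ : Fin nb) ∈ B then w ⟨i₀.1, h⟩ else 0) = 0 := hall ⟨i₀.1, hBA i₀.2⟩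
    rw [dif_pos i₀.2] at hzero
    exact hi₀ (by simpa using hzero)
  · rintro ⟨hW', hG'⟩
    constructor
    · intro A hA
      rw [hA1iff A]
      intro y hy
      obtain ⟨A', hA'A, hA'card⟩ := Finset.exists_subset_card_eq hA
      have hli : LinearIndependent K fun i : {i // i ∈ A'} => Matrix.fromCols G F i.1 :=
        hW' A' hA'card
      have hcard' : Fintype.card {i // i ∈ A'} = Fintype.card (Fin t ⊕ Fin (r - t)) := by
        rw [Fintype.card_coe, hA'card, hcardSum]
      have hinj := mulVec_inj_of_rows_li (rowRestrict A' (Matrix.fromCols G F)) hcard'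
        (by exact hli)
      obtain ⟨x, hx⟩ := (mem_colSpan_iff _ _).mp hy
      have hz : rowRestrict A' (Matrix.fromCols G F) *ᵥ Sum.elim x (-y) = 0 := by
        funext i
        have hxi := congr_fun hx ⟨i.1, hA'A i.2⟩
        rw [rowRestrict_mulVec_apply, rowRestrict_mulVec_apply] at hxi
        rw [rowRestrict_mulVec_apply, Fintype.sum_sum_type]
        simp only [Sum.elim_inl, Sum.elim_inr, Pi.neg_apply, mul_neg, Matrix.fromCols,
          Matrix.of_apply]
        rw [Finset.sum_neg_distrib, hxi]
        simp
      have h0 := hinj _ hz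
      have hy0 : -y = 0 := funext fun j => congr_fun h0 (Sum.inr j)
      exact neg_eq_zero.mp hy0
    · intro B hB j
      obtain ⟨B', hBB', hB'card⟩ := Finset.exists_superset_card_eq
        hB (by simpa using le_trans htr.le hrn)
      have hli : LinearIndependent K fun i : {i // i ∈ B'} => G i.1 := hG' B' hB'card
      obtain ⟨x, hx⟩ := mulVec_surj_of_rows_li (rowRestrict B' G) (by exact hli)
        (fun i : {i // i ∈ B'} => F i.1 j)
      rw [mem_colSpan_iff]
      refine ⟨x, ?_⟩
      funext i
      exact congr_fun hx ⟨i.1, hBB' i.2⟩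
end

section
/- Let G be an n̄×y matrix over a finite field 𝔽_q and let Q be an n̄×(fx) matrix over 𝔽_q written in blocks Q = (Q_1,…,Q_f) with each Q_j of size n̄×x, and fix k ∈ {1,…,f}. Then the coset Q·m⃗ + Im(G) in the quotient 𝔽_q^{n̄}/Im(G) depends only on the k-th block of m⃗ — i.e., Q·m⃗ + Im(G) = Q·m⃗' + Im(G) for all m⃗ = (m_1,…,m_f), m⃗' = (m'_1,…,m'_f) ∈ (𝔽_q^x)^f with m_k = m'_k — if and only if for every j ≠ k every column of Q_j lies in the column span of G. (This is the characterization of server secrecy for a linear CSPIR protocol with G and query value Q of index k.) -/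
/-!
Writing `Q *ᵥ m` as the combination `∑ₚ mₚ • Q.col p` of the columns of `Q`, the coset of
`Q *ᵥ m` ignores the blocks `j ≠ k` of `m` exactly when each column of such a block lies in the
submodule; necessity is seen on the unit vectors supported on one of those columns.
-/

open Matrix

section

variable {R ι ν : Type*} [CommRing R] [Fintype ν]

theorem Matrix.mulVec_mem_of_col_mem {W : Submodule R (ι → R)} (Q : Matrix ι ν R) {v : ν → R}
    (hv : ∀ p, v p ≠ 0 → Q.col p ∈ W) : Q *ᵥ v ∈ W := by
  rw [mulVec_eq_sum]
  refine Submodule.sum_mem _ fun p _ => ?_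
  by_cases hp : v p = 0
  · simp [hp]
  · rw [op_smul_eq_smul]
    exact W.smul_mem (v p) (hv p hp)

theorem Submodule.mkQ_mulVec_uncurry_eq_iff_col_mem {α β : Type*} [Fintype α] [Fintype β]
    (W : Submodule R (ι → R)) (Q : Matrix ι (α × β) R) (k : α) :
    (∀ m m' : α → β → R, m k = m' k →
        W.mkQ (Q *ᵥ fun p => m p.1 p.2) = W.mkQ (Q *ᵥ fun p => m' p.1 p.2)) ↔
      ∀ j, j ≠ k → ∀ i, Q.col (j, i) ∈ W := by
  classical
  constructor
  · intro h j hj i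
    have hunit := h (fun a b => (Pi.single (j, i) 1 : α × β → R) (a, b)) 0
      (funext fun b => by simp [hj.symm])
    simpa [mulVec_single_one, ← Pi.zero_def, Submodule.Quotient.mk_eq_zero] using hunit
  · intro h m m' hk
    rw [mkQ_apply, mkQ_apply, Submodule.Quotient.eq, ← mulVec_sub]
    refine Q.mulVec_mem_of_col_mem fun ⟨j, i⟩ hne => h j ?_ i
    rintro rfl
    exact hne (by simp [hk])

end

theorem stmt8_general {K : Type*} [Field K] {nb y f x : ℕ}
    (G : Matrix (Fin nb) (Fin y) K) (Q : Matrix (Fin nb) (Fin f × Fin x) K) (k : Fin f) :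
    (∀ m m' : Fin f → Fin x → K, m k = m' k →
        (colSpan G).mkQ (Q.mulVec fun p => m p.1 p.2)
          = (colSpan G).mkQ (Q.mulVec fun p => m' p.1 p.2))
      ↔
    (∀ j : Fin f, j ≠ k → ∀ i : Fin x,
        (fun row : Fin nb => Q row (j, i)) ∈ colSpan G) :=
  (colSpan G).mkQ_mulVec_uncurry_eq_iff_col_mem Q k

/-- for an `n̄×y` matrix `G` and an `n̄×(fx)` matrix `Q` with blocks
`Q_1, …, Q_f` (block `Q_j` consists of the columns `(j, ·)`), and a fixed `k`,
the coset `Q·m⃗ + Im G` depends only on the `k`-th block of `m⃗` iff for every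
`j ≠ k` every column of `Q_j` lies in the column span of `G` (the characterization
of server secrecy for a linear CSPIR protocol). -/
theorem stmt8 {K : Type*} [Field K] [Fintype K] {nb y f x : ℕ}
    (G : Matrix (Fin nb) (Fin y) K) (Q : Matrix (Fin nb) (Fin f × Fin x) K) (k : Fin f) :
    (∀ m m' : Fin f → Fin x → K, m k = m' k →
        (colSpan G).mkQ (Q.mulVec fun p => m p.1 p.2)
          = (colSpan G).mkQ (Q.mulVec fun p => m' p.1 p.2))
      ↔
    (∀ j : Fin f, j ≠ k → ∀ i : Fin x,
        (fun row : Fin nb => Q row (j, i)) ∈ colSpan G) :=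
  stmt8_general G Q k
end

section
/- For every prime p and positive integers a ≤ b, there exist a power q of p and matrices A ∈ 𝔽_q^{2b×a} and B ∈ 𝔽_q^{2b×(2b−a)} such that: (N1) AᵀJA = 0; (N2) AᵀJB = 0; (N3) A is a (2b,a)-MDS code; and (N4) B is a (2b, 2b−a)-MDS code; where J is the 2b×2b block matrix J = ((0, −I_b),(I_b, 0)). -/
open Matrix

/-- The `2b×2b` block matrix `J = ((0, −I_b), (I_b, 0))`. -/
def sympJ (K : Type*) [Field K] (b : ℕ) : Matrix (Fin b ⊕ Fin b) (Fin b ⊕ Fin b) K :=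
  Matrix.fromBlocks 0 (-1) 1 0

section Aux

open Polynomial Finset

lemma basis_coeff {K : Type*} [Field K] {ι : Type*} [DecidableEq ι] [Fintype ι]
    (v : ι → K) (i : ι) :
    (Lagrange.basis Finset.univ v i).coeff (Fintype.card ι - 1) =
      (∏ j ∈ Finset.univ.erase i, (v i - v j))⁻¹ := by
  have h1 : Lagrange.basis Finset.univ v i =
      C (∏ j ∈ Finset.univ.erase i, (v i - v j)⁻¹) *
        ∏ j ∈ Finset.univ.erase i, (X - C (v j)) := by
    rw [Lagrange.basis, map_prod, ← Finset.prod_mul_distrib]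
    rfl
  have hm : (∏ j ∈ Finset.univ.erase i, (X - C (v j))).Monic :=
    monic_prod_of_monic _ _ fun j _ => monic_X_sub_C _
  have hd : (∏ j ∈ Finset.univ.erase i, (X - C (v j))).natDegree = Fintype.card ι - 1 := by
    rw [natDegree_prod_of_monic _ _ fun j _ => monic_X_sub_C _]
    simp [Finset.card_erase_of_mem]
  rw [h1, coeff_C_mul, ← hd, hm.coeff_natDegree, mul_one, ← Finset.prod_inv_distrib]

lemma lagrange_sum {K : Type*} [Field K] {ι : Type*} [Fintype ι] [DecidableEq ι]
    (v : ι → K) (hv : Function.Injective v) (P : K[X])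
    (hP : P.natDegree + 2 ≤ Fintype.card ι) :
    ∑ i, (∏ j ∈ Finset.univ.erase i, (v i - v j))⁻¹ * P.eval (v i) = 0 := by
  have hinj : Set.InjOn v (Finset.univ : Finset ι) := Function.Injective.injOn hv
  have hdeg : P.degree < (Finset.univ : Finset ι).card := by
    refine lt_of_le_of_lt degree_le_natDegree ?_
    rw [Finset.card_univ]
    exact_mod_cast (by omega : P.natDegree < Fintype.card ι)
  have hI := Lagrange.eq_interpolate hinj hdeg
  have h0 : P.coeff (Fintype.card ι - 1) = 0 :=
    coeff_eq_zero_of_natDegree_lt (by omega)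
  have := congrArg (fun Q : K[X] => Q.coeff (Fintype.card ι - 1)) hI
  simp only [h0, Lagrange.interpolate_apply, finset_sum_coeff, coeff_C_mul] at this
  calc ∑ i, (∏ j ∈ Finset.univ.erase i, (v i - v j))⁻¹ * P.eval (v i)
      = ∑ i, P.eval (v i) * (Lagrange.basis Finset.univ v i).coeff (Fintype.card ι - 1) := by
        refine Finset.sum_congr rfl fun i _ => ?_
        rw [basis_coeff, mul_comm]
    _ = 0 := this.symm

lemma isMDS_vandermonde {K : Type*} [Field K] {ι : Type*} {k : ℕ}
    (μ ζ : ι → K) (hμ : ∀ j, μ j ≠ 0) (hζ : Function.Injective ζ) :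
    IsMDS k (Matrix.of fun j (m : Fin k) => μ j * ζ j ^ (m : ℕ)) := by
  intro S hS
  have e : {i // i ∈ S} ≃ Fin k := S.equivFin.trans (finCongr hS)
  set N : Matrix (Fin k) (Fin k) K :=
    Matrix.of (fun r (m : Fin k) => μ (e.symm r).1 * ζ (e.symm r).1 ^ (m : ℕ)) with hN
  have hNdet : IsUnit N := by
    have hfactor : N = Matrix.diagonal (fun r => μ (e.symm r).1) *
        Matrix.vandermonde (fun r => ζ (e.symm r).1) := by
      ext r m
      simp [hN, Matrix.diagonal_mul, Matrix.vandermonde]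
    rw [Matrix.isUnit_iff_isUnit_det, hfactor, Matrix.det_mul, Matrix.det_diagonal]
    refine (IsUnit.mul ?_ ?_)
    · exact (Finset.prod_ne_zero_iff.mpr fun r _ => hμ _).isUnit
    · rw [isUnit_iff_ne_zero, Matrix.det_vandermonde_ne_zero_iff]
      exact hζ.comp (Subtype.val_injective.comp e.symm.injective)
  have hli : LinearIndependent K fun r : Fin k => N r :=
    Matrix.linearIndependent_rows_iff_isUnit.mpr hNdet
  have key : LinearIndependent K ((fun i : {i // i ∈ S} =>
      (Matrix.of fun j (m : Fin k) => μ j * ζ j ^ (m : ℕ)) i.1) ∘ e.symm) := hli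
  exact (linearIndependent_equiv e.symm).mp key

noncomputable def psiP (K : Type*) [Field K] : ℕ → K[X]
  | 0 => 0
  | 1 => 1
  | (n+2) => psiP K (n+1) - X * psiP K n

lemma psiP_natDegree (K : Type*) [Field K] : ∀ n, (psiP K n).natDegree ≤ n - 1 := by
  intro n
  induction n using Nat.twoStepInduction with
  | zero => simp [psiP]
  | one => simp [psiP]
  | more n ih0 ih1 =>
    show (psiP K (n+1) - X * psiP K n).natDegree ≤ n + 1
    refine le_trans (natDegree_sub_le _ _) (max_le (le_trans ih1 (by omega)) ?_)
    refine le_trans (natDegree_mul_le) ?_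
    simp only [natDegree_X]
    omega

lemma psiP_eval {K : Type*} [Field K] :
    ∀ (k : ℕ) (x y : K), x + y = 1 →
      (x - y) * (psiP K k).eval (x * y) = x ^ k - y ^ k := by
  intro k
  induction k using Nat.twoStepInduction with
  | zero => intro x y h; simp [psiP]
  | one => intro x y h; simp [psiP]
  | more n ih0 ih1 =>
    intro x y h
    have h1 := ih1 x y h
    have h0 := ih0 x y h
    show (x - y) * (psiP K (n+1) - X * psiP K n).eval (x * y) = x ^ (n+2) - y ^ (n+2)
    rw [eval_sub, eval_mul, eval_X]
    linear_combination h1 - (x*y) * h0 - (x^(n+1) - y^(n+1)) * h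

lemma sympJ_entry {K : Type*} [Field K] {b n m : ℕ}
    (A : Matrix (Fin b ⊕ Fin b) (Fin n) K) (C : Matrix (Fin b ⊕ Fin b) (Fin m) K)
    (u : Fin n) (v : Fin m) :
    (Aᵀ * sympJ K b * C) u v =
      ∑ i : Fin b, (A (Sum.inr i) u * C (Sum.inl i) v - A (Sum.inl i) u * C (Sum.inr i) v) := by
  rw [Matrix.mul_assoc, Matrix.mul_apply]
  have hJC : ∀ r, (sympJ K b * C) r v =
      Sum.elim (fun i => -C (Sum.inr i) v) (fun i => C (Sum.inl i) v) r := by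
    rintro (i | i) <;>
      simp [sympJ, Matrix.mul_apply, Matrix.fromBlocks, Fintype.sum_sum_type,
        Matrix.one_apply, Finset.sum_ite_eq, Finset.sum_ite_eq']
  simp only [hJC, Matrix.transpose_apply]
  rw [Fintype.sum_sum_type]
  simp only [Sum.elim_inl, Sum.elim_inr]
  rw [← Finset.sum_add_distrib]
  refine Finset.sum_congr rfl fun i _ => by ring

end Aux

/-- for every prime `p` and positive integers `a ≤ b` there exist a
power `q = p^s` of `p` and matrices `A ∈ 𝔽_q^{2b×a}`, `B ∈ 𝔽_q^{2b×(2b−a)}` with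
(N1) `AᵀJA = 0`, (N2) `AᵀJB = 0`, (N3) `A` a `(2b,a)`-MDS code and
(N4) `B` a `(2b,2b−a)`-MDS code. -/
theorem stmt14 (p : ℕ) [Fact p.Prime] (a b : ℕ) (ha : 0 < a) (hab : a ≤ b) :
    ∃ s : ℕ, 0 < s ∧
      ∃ (A : Matrix (Fin b ⊕ Fin b) (Fin a) (GaloisField p s))
        (B : Matrix (Fin b ⊕ Fin b) (Fin (2 * b - a)) (GaloisField p s)),
        Aᵀ * sympJ (GaloisField p s) b * A = 0 ∧
        Aᵀ * sympJ (GaloisField p s) b * B = 0 ∧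
        IsMDS a A ∧
        IsMDS (2 * b - a) B := by
  classical
  have hb : 0 < b := lt_of_lt_of_le ha hab
  refine ⟨2 * b, by omega, ?_⟩
  set K := GaloisField p (2 * b) with hKdef
  haveI : Fintype K := Fintype.ofFinite K
  have hp2 : 2 ≤ p := (Fact.out : p.Prime).two_le
  have hcard : Fintype.card K = p ^ (2 * b) := by
    rw [← Nat.card_eq_fintype_card]
    exact GaloisField.card p (2 * b) (by omega)
  have hq : 2 * b + 1 ≤ Fintype.card K := by
    rw [hcard]
    have h1 : 2 * b < 2 ^ (2 * b) := Nat.lt_two_pow_self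
    have h2 : 2 ^ (2 * b) ≤ p ^ (2 * b) := Nat.pow_le_pow_left hp2 _
    omega
  -- pick `b` points with distinct values of `z * (1 - z)` and `z ≠ 1 - z`
  set d : K → K := fun z => z * (1 - z) with hd
  set S : Finset K := Finset.univ.filter (fun z => z ≠ 1 - z) with hSdef
  have hScard : Fintype.card K - 1 ≤ S.card := by
    have hsplit := Finset.card_filter_add_card_filter_not
      (s := (Finset.univ : Finset K)) (p := fun z => z ≠ 1 - z)
    have hone : (Finset.univ.filter (fun z : K => ¬ z ≠ 1 - z)).card ≤ 1 := by
      refine Finset.card_le_one.mpr fun z1 h1 z2 h2 => ?_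
      simp only [Finset.mem_filter, not_not] at h1 h2
      have e1 : z1 + z1 = 1 := by linear_combination h1.2
      have e2 : z2 + z2 = 1 := by linear_combination h2.2
      by_cases h2K : (2 : K) = 0
      · exfalso
        have : (1 : K) = 0 := by linear_combination -e1 + z1 * h2K
        exact one_ne_zero this
      · have : (2 : K) * z1 = (2 : K) * z2 := by linear_combination e1 - e2
        exact mul_left_cancel₀ h2K this
    rw [Finset.card_univ, ← hSdef] at hsplit
    omega
  have hfiber : ∀ w ∈ S.image d, (S.filter (fun z => d z = w)).card ≤ 2 := by
    intro w _
    rcases (S.filter (fun z => d z = w)).eq_empty_or_nonempty with he | ⟨z0, hz0⟩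
    · simp [he]
    · have hsub : S.filter (fun z => d z = w) ⊆ {z0, 1 - z0} := by
        intro z hz
        simp only [Finset.mem_filter] at hz hz0
        have hzz : z * (1 - z) = z0 * (1 - z0) := by
          have h' := hz.2.trans hz0.2.symm
          simpa only [hd] using h'
        have : (z - z0) * (1 - z - z0) = 0 := by linear_combination hzz
        rcases mul_eq_zero.mp this with h | h
        · simp [sub_eq_zero.mp h]
        · have : z = 1 - z0 := by linear_combination -h
          simp [this]
      exact le_trans (Finset.card_le_card hsub)
        (le_trans (Finset.card_insert_le _ _) (by simp))
  have hTcard : b ≤ (S.image d).card := by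
    have := Finset.card_le_mul_card_image S 2 hfiber
    omega
  obtain ⟨T, hTsub, hTcardeq⟩ := Finset.exists_subset_card_eq hTcard
  have eT : Fin b ≃ {z // z ∈ T} := (finCongr hTcardeq.symm).trans T.equivFin.symm
  set δ : Fin b → K := fun i => (eT i).1 with hδdef
  have hδinj : Function.Injective δ := Subtype.val_injective.comp eT.injective
  have hδmem : ∀ i, δ i ∈ S.image d := fun i => hTsub (eT i).2
  choose x hxS hxd using fun i => Finset.mem_image.mp (hδmem i)
  obtain ⟨y, hy⟩ : ∃ y : Fin b → K, y = fun i => 1 - x i := ⟨_, rfl⟩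
  have hyi : ∀ i, y i = 1 - x i := fun i => by rw [hy]
  have hxy1 : ∀ i, x i + y i = 1 := fun i => by rw [hyi]; ring
  have hxyne : ∀ i, x i ≠ y i := by
    intro i
    have hmem := hxS i
    rw [hSdef, Finset.mem_filter] at hmem
    rw [hyi]
    exact hmem.2
  have hprod : ∀ i, x i * y i = δ i := by
    intro i
    have := hxd i
    rw [hd] at this
    rw [hyi]
    exact this
  have hprodinj : Function.Injective (fun i => x i * y i) := by
    intro i j h
    apply hδinj
    rw [← hprod i, ← hprod j]
    exact h
  have hkey : ∀ i j : Fin b, x i * y i = x j * y j → i = j := fun i j h => hprodinj h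
  obtain ⟨ξ, hξ⟩ : ∃ ξ : Fin b ⊕ Fin b → K, ξ = Sum.elim x y := ⟨_, rfl⟩
  obtain ⟨ζ, hζ⟩ : ∃ ζ : Fin b ⊕ Fin b → K, ζ = Sum.elim y x := ⟨_, rfl⟩
  have hξl : ∀ i, ξ (Sum.inl i) = x i := fun i => by rw [hξ]; rfl
  have hξr : ∀ i, ξ (Sum.inr i) = y i := fun i => by rw [hξ]; rfl
  have hζl : ∀ i, ζ (Sum.inl i) = y i := fun i => by rw [hζ]; rfl
  have hζr : ∀ i, ζ (Sum.inr i) = x i := fun i => by rw [hζ]; rfl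
  have hxyprodeq : ∀ i j : Fin b, x i = 1 - x j → x i * y i = x j * y j := by
    intro i j h
    rw [hyi, hyi, h]; ring
  have hξinj : Function.Injective ξ := by
    rintro (i | i) (j | j) h <;>
      simp only [hξ, Sum.elim_inl, Sum.elim_inr, hyi] at h
    · refine congrArg Sum.inl (hkey i j ?_)
      rw [hyi, hyi, h]
    · exfalso
      have hij : i = j := hkey i j (hxyprodeq i j h)
      rw [← hij] at h
      exact hxyne i (by rw [hyi]; exact h)
    · exfalso
      have hij : j = i := hkey j i (hxyprodeq j i h.symm)
      rw [hij] at h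
      exact hxyne i (by rw [hyi]; exact h.symm)
    · have hxx : x i = x j := by linear_combination -h
      refine congrArg Sum.inr (hkey i j ?_)
      rw [hyi, hyi, hxx]
  have hζinj : Function.Injective ζ := by
    have hcomp : ζ = ξ ∘ (Equiv.sumComm (Fin b) (Fin b)) := by
      funext j; cases j <;> simp [hζ, hξ]
    rw [hcomp]
    exact hξinj.comp (Equiv.sumComm (Fin b) (Fin b)).injective
  obtain ⟨U, hU⟩ : ∃ U : Fin b → K,
      U = fun i => (∏ j ∈ Finset.univ.erase i, (x i * y i - x j * y j))⁻¹ := ⟨_, rfl⟩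
  obtain ⟨V, hV⟩ : ∃ V : Fin b ⊕ Fin b → K,
      V = fun j => (∏ l ∈ Finset.univ.erase j, (ξ j - ξ l))⁻¹ := ⟨_, rfl⟩
  have hUne : ∀ i, U i ≠ 0 := by
    intro i
    rw [hU]
    simp only [ne_eq, inv_eq_zero]
    rw [Finset.prod_eq_zero_iff]
    push_neg
    intro j hj
    rw [sub_ne_zero]
    exact fun hc => (Finset.mem_erase.mp hj).1 (hkey j i hc.symm)
  have hVne : ∀ j, V j ≠ 0 := by
    intro j
    rw [hV]
    simp only [ne_eq, inv_eq_zero]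
    rw [Finset.prod_eq_zero_iff]
    push_neg
    intro l hl
    rw [sub_ne_zero]
    exact fun hc => (Finset.mem_erase.mp hl).1 (hξinj hc.symm)
  obtain ⟨ω, hω⟩ : ∃ ω : Fin b ⊕ Fin b → K,
      ω = Sum.elim (fun i => U i * (x i - y i)⁻¹) (fun _ => (1 : K)) := ⟨_, rfl⟩
  have hωl : ∀ i, ω (Sum.inl i) = U i * (x i - y i)⁻¹ := fun i => by rw [hω]; rfl
  have hωr : ∀ i, ω (Sum.inr i) = 1 := fun i => by rw [hω]; rfl
  have hωne : ∀ j, ω j ≠ 0 := by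
    rintro (i | i)
    · rw [hωl]
      exact mul_ne_zero (hUne i) (inv_ne_zero (sub_ne_zero.mpr (hxyne i)))
    · rw [hωr]
      exact one_ne_zero
  obtain ⟨ν, hν⟩ : ∃ ν : Fin b ⊕ Fin b → K,
      ν = Sum.elim (fun i => V (Sum.inr i) * (ω (Sum.inr i))⁻¹)
        (fun i => -(V (Sum.inl i) * (ω (Sum.inl i))⁻¹)) := ⟨_, rfl⟩
  have hνl : ∀ i, ν (Sum.inl i) = V (Sum.inr i) * (ω (Sum.inr i))⁻¹ := fun i => by rw [hν]; rfl
  have hνr : ∀ i, ν (Sum.inr i) = -(V (Sum.inl i) * (ω (Sum.inl i))⁻¹) := fun i => by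
    rw [hν]; rfl
  have hνne : ∀ j, ν j ≠ 0 := by
    rintro (i | i)
    · rw [hνl]
      exact mul_ne_zero (hVne _) (inv_ne_zero (hωne _))
    · rw [hνr, neg_ne_zero]
      exact mul_ne_zero (hVne _) (inv_ne_zero (hωne _))
  obtain ⟨A, hA⟩ : ∃ A : Matrix (Fin b ⊕ Fin b) (Fin a) K,
      A = Matrix.of (fun j (m : Fin a) => ω j * ξ j ^ (m : ℕ)) := ⟨_, rfl⟩
  obtain ⟨B, hB⟩ : ∃ B : Matrix (Fin b ⊕ Fin b) (Fin (2 * b - a)) K,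
      B = Matrix.of (fun j (m : Fin (2 * b - a)) => ν j * ζ j ^ (m : ℕ)) := ⟨_, rfl⟩
  have hAe : ∀ j (m : Fin a), A j m = ω j * ξ j ^ (m : ℕ) := fun j m => by rw [hA]; rfl
  have hBe : ∀ j (m : Fin (2 * b - a)), B j m = ν j * ζ j ^ (m : ℕ) := fun j m => by
    rw [hB]; rfl
  refine ⟨A, B, ?_, ?_, ?_, ?_⟩
  · -- N1 : AᵀJA = 0
    have E : ∀ u v : ℕ, u < v → v < a →
        ∑ i, U i * ((x i - y i)⁻¹ * (x i ^ v * y i ^ u - x i ^ u * y i ^ v)) = 0 := by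
      intro u v huv hva
      obtain ⟨w, rfl⟩ : ∃ w, v = u + w := ⟨v - u, by omega⟩
      have hw1 : 1 ≤ w := by omega
      have hterm : ∀ i, U i * ((x i - y i)⁻¹ *
            (x i ^ (u + w) * y i ^ u - x i ^ u * y i ^ (u + w)))
          = U i * ((Polynomial.X : Polynomial K) ^ u * psiP K w).eval (x i * y i) := by
        intro i
        have hne : x i - y i ≠ 0 := sub_ne_zero.mpr (hxyne i)
        have key := psiP_eval w (x i) (y i) (hxy1 i)
        have expand : x i ^ (u + w) * y i ^ u - x i ^ u * y i ^ (u + w)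
            = x i ^ u * y i ^ u * ((x i - y i) * (psiP K w).eval (x i * y i)) := by
          rw [key, pow_add, pow_add]; ring
        rw [expand, Polynomial.eval_mul, Polynomial.eval_pow, Polynomial.eval_X, mul_pow]
        congr 1
        calc (x i - y i)⁻¹ * (x i ^ u * y i ^ u * ((x i - y i) *
                (psiP K w).eval (x i * y i)))
            = ((x i - y i)⁻¹ * (x i - y i)) * (x i ^ u * y i ^ u *
                (psiP K w).eval (x i * y i)) := by ring
          _ = x i ^ u * y i ^ u * (psiP K w).eval (x i * y i) := by
              rw [inv_mul_cancel₀ hne, one_mul]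
      have hsum : ∑ i, U i * ((x i - y i)⁻¹ *
            (x i ^ (u + w) * y i ^ u - x i ^ u * y i ^ (u + w)))
          = ∑ i, U i * ((Polynomial.X : Polynomial K) ^ u * psiP K w).eval (x i * y i) :=
        Finset.sum_congr rfl fun i _ => hterm i
      rw [hsum]
      have hdeg : ((Polynomial.X : Polynomial K) ^ u * psiP K w).natDegree + 2 ≤
          Fintype.card (Fin b) := by
        have h1 := psiP_natDegree K w
        have h2 : ((Polynomial.X : Polynomial K) ^ u * psiP K w).natDegree ≤ u + (w - 1) := by
          refine le_trans Polynomial.natDegree_mul_le ?_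
          rw [Polynomial.natDegree_X_pow]
          omega
        rw [Fintype.card_fin]
        omega
      have hls := lagrange_sum (fun i => x i * y i) hprodinj
        ((Polynomial.X : Polynomial K) ^ u * psiP K w) hdeg
      rw [hU]
      exact hls
    ext u v
    rw [Matrix.zero_apply, sympJ_entry]
    have hterm : ∀ i, (A (Sum.inr i) u * A (Sum.inl i) v - A (Sum.inl i) u * A (Sum.inr i) v)
        = U i * ((x i - y i)⁻¹ *
            (x i ^ (v : ℕ) * y i ^ (u : ℕ) - x i ^ (u : ℕ) * y i ^ (v : ℕ))) := by
      intro i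
      rw [hAe, hAe, hAe, hAe, hξl, hξr, hωl, hωr]
      ring
    rw [Finset.sum_congr rfl fun i _ => hterm i]
    rcases lt_trichotomy (u : ℕ) (v : ℕ) with h | h | h
    · exact E (u : ℕ) (v : ℕ) h v.isLt
    · refine Finset.sum_eq_zero fun i _ => ?_
      rw [h]; ring
    · have hE := E (v : ℕ) (u : ℕ) h u.isLt
      calc ∑ i, U i * ((x i - y i)⁻¹ *
              (x i ^ (v : ℕ) * y i ^ (u : ℕ) - x i ^ (u : ℕ) * y i ^ (v : ℕ)))
          = -∑ i, U i * ((x i - y i)⁻¹ *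
              (x i ^ (u : ℕ) * y i ^ (v : ℕ) - x i ^ (v : ℕ) * y i ^ (u : ℕ))) := by
            rw [← Finset.sum_neg_distrib]
            exact Finset.sum_congr rfl fun i _ => by ring
        _ = 0 := by rw [hE, neg_zero]
  · -- N2 : AᵀJB = 0
    ext u k
    rw [Matrix.zero_apply, sympJ_entry]
    have hterm : ∀ i, (A (Sum.inr i) u * B (Sum.inl i) k - A (Sum.inl i) u * B (Sum.inr i) k)
        = V (Sum.inr i) * y i ^ ((u : ℕ) + (k : ℕ)) +
          V (Sum.inl i) * x i ^ ((u : ℕ) + (k : ℕ)) := by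
      intro i
      have hωinl : ω (Sum.inl i) ≠ 0 := hωne (Sum.inl i)
      rw [hAe, hAe, hBe, hBe, hξl, hξr, hζl, hζr, hωr, hνl, hνr, hωr, inv_one,
        pow_add, pow_add]
      linear_combination (V (Sum.inl i) * x i ^ (u : ℕ) * x i ^ (k : ℕ)) * mul_inv_cancel₀ hωinl
    rw [Finset.sum_congr rfl fun i _ => hterm i]
    have hswap : ∑ i, (V (Sum.inr i) * y i ^ ((u : ℕ) + (k : ℕ)) +
          V (Sum.inl i) * x i ^ ((u : ℕ) + (k : ℕ)))
        = ∑ j, V j * ((Polynomial.X : Polynomial K) ^ ((u : ℕ) + (k : ℕ))).eval (ξ j) := by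
      simp only [Polynomial.eval_pow, Polynomial.eval_X]
      rw [Fintype.sum_sum_type]
      simp only [hξl, hξr]
      rw [Finset.sum_add_distrib]
      exact add_comm _ _
    rw [hswap]
    have hdeg : ((Polynomial.X : Polynomial K) ^ ((u : ℕ) + (k : ℕ))).natDegree + 2 ≤
        Fintype.card (Fin b ⊕ Fin b) := by
      rw [Polynomial.natDegree_X_pow]
      have hu := u.isLt
      have hk := k.isLt
      simp only [Fintype.card_sum, Fintype.card_fin]
      omega
    have hls := lagrange_sum ξ hξinj
      ((Polynomial.X : Polynomial K) ^ ((u : ℕ) + (k : ℕ))) hdeg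
    rw [hV]
    exact hls
  · rw [hA]
    exact isMDS_vandermonde ω ξ hωne hξinj
  · rw [hB]
    exact isMDS_vandermonde ν ζ hνne hζinj
end

section
/- For every prime p and positive integers a ≤ b and c with a + c ≤ 2b, there exist a power q of p and matrices A ∈ 𝔽_q^{2b×a}, B ∈ 𝔽_q^{2b×(2b−a)}, and C ∈ 𝔽_q^{2b×c} such that: AᵀJA = 0 and AᵀJB = 0 (with J the 2b×2b block matrix ((0,−I_b),(I_b,0))); A is a (2b,a)-MDS code and B is a (2b,2b−a)-MDS code; (N5) the 2b×(a+c) matrix (A,C) is a (2b, a+c)-MDS code; (N6) for every s with 1 ≤ s ≤ c, the 2b×(a+s) matrix (A, C^{(s)}) is a (2b, a+s)-MDS code, where C^{(s)} denotes the matrix formed by the first s columns of C; and (N7) if moreover c ≤ a, the 2b×(2b−a+c) matrix (B,C) is a (2b, 2b−a+c)-MDS code. -/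
open Matrix

namespace Stmt15Aux

open MvPolynomial

variable {K : Type*} [Field K]

/-- Pivot criterion for linear independence. -/
theorem pivot_li {ι η : Type*} (v : ι → η → K) (ρ : ι → ℕ)
    (hρ : Function.Injective ρ) (τ : ι → η)
    (hdiag : ∀ i, v i (τ i) = 1)
    (htri : ∀ i j, ρ j < ρ i → v j (τ i) = 0) :
    LinearIndependent K v := by
  classical
  rw [linearIndependent_iff']
  intro s g hsum i hi
  by_contra hgi
  let t := s.filter fun j => g j ≠ 0
  have ht : t.Nonempty := ⟨i, Finset.mem_filter.2 ⟨hi, hgi⟩⟩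
  obtain ⟨i0, hi0, hmax⟩ := t.exists_max_image ρ ht
  have hi0s : i0 ∈ s := (Finset.mem_filter.1 hi0).1
  have hgi0 : g i0 ≠ 0 := (Finset.mem_filter.1 hi0).2
  have hev := congrFun hsum (τ i0)
  rw [Finset.sum_apply] at hev
  simp only [Pi.smul_apply, smul_eq_mul, Pi.zero_apply] at hev
  rw [Finset.sum_eq_single i0 (fun j hj hne => by
      by_cases hgj : g j = 0
      · rw [hgj, zero_mul]
      · have hjt : j ∈ t := Finset.mem_filter.2 ⟨hj, hgj⟩
        have hlt : ρ j < ρ i0 :=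
          lt_of_le_of_ne (hmax j hjt) (fun h => hne (hρ h))
        rw [htri i0 j hlt, mul_zero])
    (fun h => absurd hi0s h)] at hev
  rw [hdiag i0, mul_one] at hev
  exact hgi0 hev

/-- Precomposition with an equivalence of the coordinates preserves linear
independence. -/
theorem li_precomp {ι η η' : Type*} (e : η' ≃ η) {v : ι → η → K}
    (h : LinearIndependent K v) :
    LinearIndependent K fun i => v i ∘ e := by
  have := h.map' (LinearEquiv.funCongrLeft K K e).toLinearMap
    (LinearEquiv.ker _)
  convert this using 1 <;> rfl

theorem li_iff_det {n : ℕ} {ι η : Type*} [Fintype ι] [Fintype η] [DecidableEq ι]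
    (v : ι → η → K) (eι : ι ≃ Fin n) (eη : η ≃ Fin n) :
    LinearIndependent K v ↔
      (Matrix.of fun i j : Fin n => v (eι.symm i) (eη.symm j)).det ≠ 0 := by
  classical
  have h1 : LinearIndependent K v ↔
      LinearIndependent K fun i : Fin n => v (eι.symm i) :=
    (linearIndependent_equiv eι.symm (f := v)).symm
  have h2 : (LinearIndependent K fun i : Fin n => v (eι.symm i)) ↔
      LinearIndependent K fun i : Fin n => v (eι.symm i) ∘ eη.symm := by
    constructor
    · exact fun h => li_precomp eη.symm h
    · intro h
      have := li_precomp eη (v := fun i : Fin n => v (eι.symm i) ∘ eη.symm) h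
      convert this using 1
      funext i
      simp [Function.comp_def]
  rw [h1, h2]
  have h3 : (fun i : Fin n => v (eι.symm i) ∘ eη.symm) =
      (Matrix.of fun i j : Fin n => v (eι.symm i) (eη.symm j)).row := rfl
  rw [h3, Matrix.linearIndependent_rows_iff_isUnit, Matrix.isUnit_iff_isUnit_det,
    isUnit_iff_ne_zero]

/-- Linear independence descends along an injective ring hom on the entries. -/
theorem li_of_comp_injective {F F' : Type*} [Field F] [Field F'] (f : F →+* F')
    {ι η : Type*} (v : ι → η → F)
    (h : LinearIndependent F' fun i => fun j => f (v i j)) :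
    LinearIndependent F v := by
  rw [linearIndependent_iff'] at h ⊢
  intro s g hg i hi
  have h2 : ∑ j ∈ s, (fun x => f (g x)) j • (fun x => f (v j x)) = 0 := by
    funext y
    rw [Finset.sum_apply]
    simp only [Pi.smul_apply, smul_eq_mul, Pi.zero_apply]
    have hy := congrFun hg y
    rw [Finset.sum_apply] at hy
    simp only [Pi.smul_apply, smul_eq_mul, Pi.zero_apply] at hy
    calc ∑ j ∈ s, f (g j) * f (v j y) = f (∑ j ∈ s, g j * v j y) := by
          rw [map_sum]; exact Finset.sum_congr rfl fun j _ => (map_mul f _ _).symm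
      _ = 0 := by rw [hy, map_zero]
  have := h s (fun x => f (g x)) h2 i hi
  exact f.injective (by simpa using this)

theorem exists_eval_ne_zero_poly {σ : Type*} [Infinite K] {f : MvPolynomial σ K}
    (hf : f ≠ 0) : ∃ x : σ → K, MvPolynomial.eval x f ≠ 0 := by
  by_contra h
  push_neg at h
  exact hf (MvPolynomial.funext fun x => by simp [h x])

noncomputable def embOfCardLe {α β : Type*} [Fintype α] [Fintype β]
    (h : Fintype.card α ≤ Fintype.card β) : α ↪ β :=
  ((Fintype.equivFin α).toEmbedding.trans (Fin.castLEEmb h)).trans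
    (Fintype.equivFin β).symm.toEmbedding

end Stmt15Aux

namespace Stmt15Aux

open MvPolynomial

inductive MyVar (a b c : ℕ) : Type where
  | vx : Fin b → Fin a → MyVar a b c
  | vt : Fin b → Fin b → MyVar a b c
  | vy : Fin b → Fin (2 * b - a) → MyVar a b c
  | vd : Fin b → Fin (2 * b - a) → MyVar a b c
  | vc : Fin b ⊕ Fin b → Fin c → MyVar a b c

variable (K : Type*) [Field K] (a b c : ℕ)

noncomputable def Xm : Matrix (Fin b) (Fin a) (MvPolynomial (MyVar a b c) K) := fun i j =>
  if (i : ℕ) < a then (if (i : ℕ) = (j : ℕ) then 1 else 0) else MvPolynomial.X (.vx i j)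

noncomputable def Tm : Matrix (Fin b) (Fin b) (MvPolynomial (MyVar a b c) K) := fun i j =>
  MvPolynomial.X (.vt (min i j) (max i j))

noncomputable def Ym : Matrix (Fin b) (Fin (2 * b - a)) (MvPolynomial (MyVar a b c) K) :=
  fun i j => MvPolynomial.X (.vy i j)

noncomputable def Dm : Matrix (Fin b) (Fin (2 * b - a)) (MvPolynomial (MyVar a b c) K) :=
  fun k j => if a ≤ (k : ℕ) then MvPolynomial.X (.vd k j) else 0

noncomputable def Um : Matrix (Fin b) (Fin (2 * b - a)) (MvPolynomial (MyVar a b c) K) :=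
  fun i j =>
    if hi : (i : ℕ) < a then -∑ k : Fin b, Xm K a b c k ⟨i, hi⟩ * Dm K a b c k j
    else Dm K a b c i j

noncomputable def Am : Matrix (Fin b ⊕ Fin b) (Fin a) (MvPolynomial (MyVar a b c) K) :=
  fromRows (Xm K a b c) (Tm K a b c * Xm K a b c)

noncomputable def Bm : Matrix (Fin b ⊕ Fin b) (Fin (2 * b - a)) (MvPolynomial (MyVar a b c) K) :=
  fromRows (Ym K a b c) (Tm K a b c * Ym K a b c + Um K a b c)

noncomputable def Cm : Matrix (Fin b ⊕ Fin b) (Fin c) (MvPolynomial (MyVar a b c) K) :=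
  fun i j => MvPolynomial.X (.vc i j)

noncomputable def Jm : Matrix (Fin b ⊕ Fin b) (Fin b ⊕ Fin b) (MvPolynomial (MyVar a b c) K) :=
  fromBlocks 0 (-1) 1 0

lemma Tm_symm : (Tm K a b c)ᵀ = Tm K a b c := by
  ext i j
  simp only [Tm, transpose_apply]
  rw [min_comm, max_comm]

lemma XmUm (hab : a ≤ b) : (Xm K a b c)ᵀ * Um K a b c = 0 := by
  ext j l
  simp only [mul_apply, transpose_apply, Matrix.zero_apply]
  have hterm : ∀ k : Fin b, Xm K a b c k j * Um K a b c k l =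
      (if (k : ℕ) = (j : ℕ) ∧ (k : ℕ) < a then
        -(∑ k' : Fin b, Xm K a b c k' j * Dm K a b c k' l) else 0)
      + Xm K a b c k j * Dm K a b c k l := by
    intro k
    by_cases hk : (k : ℕ) < a
    · have hD : Dm K a b c k l = 0 := by simp [Dm, Nat.not_le.2 hk]
      rw [hD, mul_zero, add_zero]
      by_cases hkj : (k : ℕ) = (j : ℕ)
      · rw [if_pos ⟨hkj, hk⟩]
        have hX : Xm K a b c k j = 1 := by simp [Xm, hk, hkj]
        rw [hX, one_mul]
        have hfin : (⟨(k : ℕ), hk⟩ : Fin a) = j := Fin.ext hkj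
        rw [Um, dif_pos hk, hfin]
      · rw [if_neg (by tauto)]
        have hX : Xm K a b c k j = 0 := by simp [Xm, hk, hkj]
        rw [hX, zero_mul]
    · have hU : Um K a b c k l = Dm K a b c k l := by rw [Um, dif_neg hk]
      rw [hU, if_neg (by tauto), zero_add]
  rw [Finset.sum_congr rfl (fun k _ => hterm k), Finset.sum_add_distrib]
  have h1 : (∑ k : Fin b, if (k : ℕ) = (j : ℕ) ∧ (k : ℕ) < a then
      -(∑ k' : Fin b, Xm K a b c k' j * Dm K a b c k' l) else 0)
      = -(∑ k' : Fin b, Xm K a b c k' j * Dm K a b c k' l) := by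
    rw [Finset.sum_eq_single (Fin.castLE hab j)]
    · rw [if_pos ⟨by simp, by simpa using j.2⟩]
    · intro k _ hk
      rw [if_neg]
      rintro ⟨h1, _⟩
      exact hk (Fin.ext (by simpa using h1))
    · intro h
      exact absurd (Finset.mem_univ _) h
  rw [h1, neg_add_cancel]

lemma AmJmAm : (Am K a b c)ᵀ * Jm K a b c * Am K a b c = 0 := by
  rw [Am, Jm, transpose_fromRows, Matrix.mul_assoc, fromBlocks_mul_fromRows,
    fromCols_mul_fromRows]
  simp only [Matrix.zero_mul, Matrix.one_mul, Matrix.neg_mul, zero_add, add_zero,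
    Matrix.mul_neg, transpose_mul, Tm_symm]
  rw [Matrix.mul_assoc]
  exact neg_add_cancel _

lemma AmJmBm (hab : a ≤ b) : (Am K a b c)ᵀ * Jm K a b c * Bm K a b c = 0 := by
  rw [Am, Bm, Jm, transpose_fromRows, Matrix.mul_assoc, fromBlocks_mul_fromRows,
    fromCols_mul_fromRows]
  simp only [Matrix.zero_mul, Matrix.one_mul, Matrix.neg_mul, zero_add, add_zero,
    Matrix.mul_neg, transpose_mul, Tm_symm, Matrix.mul_add]
  rw [Matrix.mul_assoc]
  rw [XmUm K a b c hab]
  simp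

end Stmt15Aux

namespace Stmt15Aux

open MvPolynomial

variable {K : Type*} [Field K] {a b c : ℕ}

def rank0 (b : ℕ) : Fin b ⊕ Fin b → ℕ := Sum.elim Fin.val (fun q => b + (q : ℕ))

lemma rank0_inj : Function.Injective (rank0 b) := by
  rintro (p | p) (q | q) h <;> simp only [rank0, Sum.elim_inl, Sum.elim_inr] at h
  · exact congrArg Sum.inl (Fin.ext h)
  · exact absurd h (by omega)
  · exact absurd h (by omega)
  · exact congrArg Sum.inr (Fin.ext (by omega))

lemma rank0_lt (r : Fin b ⊕ Fin b) : rank0 b r < 2 * b := by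
  rcases r with p | q
  · simpa [rank0] using by omega
  · simp only [rank0, Sum.elim_inr]; omega

theorem coreA (K : Type*) [Field K] (a b c : ℕ) (ha : 0 < a) (hab : a ≤ b)
    (wc : (Fin b ⊕ Fin b) → Fin c → K)
    (R₀ : Finset (Fin b ⊕ Fin b)) (hR₀ : R₀.card = a) :
    ∃ (w : MyVar a b c → K) (piv : (Fin b ⊕ Fin b) → Fin a),
      (∀ r j, w (.vc r j) = wc r j) ∧
      (∀ r ∈ R₀, MvPolynomial.eval w (Am K a b c r (piv r)) = 1) ∧
      (∀ r ∈ R₀, ∀ r' ∈ R₀, rank0 b r' < rank0 b r →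
        MvPolynomial.eval w (Am K a b c r' (piv r)) = 0) := by
  classical
  set SP := R₀.toLeft with hSP
  set SQ := R₀.toRight with hSQ
  have hPQ : SP.card + SQ.card = a := by
    rw [hSP, hSQ, Finset.card_toLeft_add_card_toRight]; exact hR₀
  set D := SQ ∩ SP with hD
  set OUT : Finset (Fin b) := Finset.univ \ (SP ∪ SQ) with hOUT
  have hDcard : Fintype.card {x // x ∈ D} ≤ Fintype.card {x // x ∈ OUT} := by
    simp only [Fintype.card_coe]
    have h1 := Finset.card_union_add_card_inter SP SQ
    have h2 : (SP ∪ SQ).card ≤ b := by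
      simpa using Finset.card_le_univ (SP ∪ SQ)
    have h3 : OUT.card = b - (SP ∪ SQ).card := by
      rw [hOUT, Finset.card_sdiff_of_subset (Finset.subset_univ _)]
      simp
    have h4 : D.card = (SP ∩ SQ).card := by rw [hD, Finset.inter_comm]
    omega
  let φe := embOfCardLe hDcard
  set φ : Fin b → Fin b := fun q => if h : q ∈ D then (φe ⟨q, h⟩ : {x // x ∈ OUT}).1 else q
    with hφdef
  have hφOUT : ∀ q, q ∈ D → φ q ∈ OUT := by
    intro q h
    simp only [hφdef, dif_pos h]
    exact (φe ⟨q, h⟩).2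
  have hOUTnot : ∀ x ∈ OUT, x ∉ SP ∧ x ∉ SQ := by
    intro x hx
    simp only [hOUT, Finset.mem_sdiff, Finset.mem_union] at hx
    tauto
  have hφnotSP : ∀ q ∈ SQ, φ q ∉ SP := by
    intro q hq
    by_cases h : q ∈ D
    · exact (hOUTnot _ (hφOUT q h)).1
    · simp only [hφdef, dif_neg h]
      intro hqSP
      exact h (Finset.mem_inter.2 ⟨hq, hqSP⟩)
  have hφinj : ∀ q ∈ SQ, ∀ q' ∈ SQ, φ q = φ q' → q = q' := by
    intro q hq q' hq' heq
    by_cases h : q ∈ D <;> by_cases h' : q' ∈ D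
    · simp only [hφdef, dif_pos h, dif_pos h'] at heq
      have := φe.injective (Subtype.ext heq)
      exact congrArg Subtype.val this
    · exfalso
      simp only [hφdef, dif_pos h, dif_neg h'] at heq
      exact (hOUTnot _ (by rw [← heq]; exact (φe ⟨q, h⟩).2)).2 hq'
    · exfalso
      simp only [hφdef, dif_neg h, dif_pos h'] at heq
      exact (hOUTnot _ (by rw [heq]; exact (φe ⟨q', h'⟩).2)).2 hq
    · simpa only [hφdef, dif_neg h, dif_neg h'] using heq
  have hφback : ∀ q ∈ SQ, ∀ q' ∈ SQ, φ q' = q → q' = q := by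
    intro q hq q' hq' heq
    by_cases h' : q' ∈ D
    · exact absurd hq (by rw [← heq]; exact (hOUTnot _ (hφOUT q' h')).2)
    · simpa only [hφdef, dif_neg h'] using heq
  set S' := SP ∪ SQ.image φ with hS'
  have hdisj : Disjoint SP (SQ.image φ) := by
    rw [Finset.disjoint_right]
    intro x hx
    obtain ⟨q, hq, rfl⟩ := Finset.mem_image.1 hx
    exact hφnotSP q hq
  have hS'card : S'.card = a := by
    rw [hS', Finset.card_union_of_disjoint hdisj,
      Finset.card_image_of_injOn (fun q hq q' hq' => hφinj q hq q' hq'), hPQ]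
  -- the extension of rows beyond the identity block
  set castb : Fin a → Fin b := Fin.castLE hab with hcastb
  set LOWF : Finset (Fin a) := Finset.univ.filter (fun j : Fin a => castb j ∈ S') with hLOWF
  set HIGH : Finset (Fin b) := S'.filter (fun i : Fin b => ¬((i : ℕ) < a)) with hHIGH
  set TARG : Finset (Fin a) := Finset.univ \ LOWF with hTARG
  have hlowimg : S'.filter (fun i : Fin b => (i : ℕ) < a) = LOWF.image castb := by
    ext i
    constructor
    · intro hi
      rw [Finset.mem_filter] at hi
      rw [Finset.mem_image]
      refine ⟨⟨(i : ℕ), hi.2⟩, ?_, by simp [hcastb, Fin.ext_iff]⟩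
      rw [hLOWF, Finset.mem_filter]
      refine ⟨Finset.mem_univ _, ?_⟩
      have hci : castb ⟨(i : ℕ), hi.2⟩ = i := by simp [hcastb, Fin.ext_iff]
      rw [hci]
      exact hi.1
    · intro hi
      rw [Finset.mem_image] at hi
      obtain ⟨j, hj, rfl⟩ := hi
      rw [hLOWF, Finset.mem_filter] at hj
      rw [Finset.mem_filter]
      exact ⟨hj.2, by simp [hcastb]⟩
  have hcards : Fintype.card {x // x ∈ HIGH} ≤ Fintype.card {x // x ∈ TARG} := by
    simp only [Fintype.card_coe]
    have h1 : (S'.filter (fun i : Fin b => (i : ℕ) < a)).card + HIGH.card = S'.card :=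
      Finset.card_filter_add_card_filter_not _
    have h2 : (S'.filter (fun i : Fin b => (i : ℕ) < a)).card = LOWF.card := by
      rw [hlowimg, Finset.card_image_of_injective _ ((Fin.strictMono_castLE hab).injective)]
    have h3 : TARG.card = a - LOWF.card := by
      rw [hTARG, Finset.card_sdiff_of_subset (Finset.subset_univ _)]
      simp
    have h4 : LOWF.card ≤ a := by simpa using Finset.card_le_univ LOWF
    omega
  let ψe := embOfCardLe hcards
  set xival : Fin b → Fin a := fun i =>
    if h : i ∈ HIGH then (ψe ⟨i, h⟩ : {x // x ∈ TARG}).1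
    else if h2 : (i : ℕ) < a then ⟨(i : ℕ), h2⟩ else ⟨0, ha⟩ with hxival
  have hxlow : ∀ i : Fin b, (h2 : (i : ℕ) < a) → xival i = ⟨(i : ℕ), h2⟩ := by
    intro i h2
    have : i ∉ HIGH := by simp [hHIGH, h2]
    simp [hxival, this, h2]
  have hxhigh : ∀ i (h : i ∈ HIGH), castb (xival i) ∉ S' := by
    intro i h
    have : xival i ∈ TARG := by
      simp only [hxival, dif_pos h]
      exact (ψe ⟨i, h⟩).2
    simp only [hTARG, Finset.mem_sdiff, hLOWF, Finset.mem_filter, Finset.mem_univ,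
      true_and] at this
    exact this
  have hxinj : ∀ i ∈ S', ∀ i' ∈ S', xival i = xival i' → i = i' := by
    intro i hi i' hi' heq
    by_cases h : i ∈ HIGH <;> by_cases h' : i' ∈ HIGH
    · simp only [hxival, dif_pos h, dif_pos h'] at heq
      have := ψe.injective (Subtype.ext heq)
      cases this; rfl
    · exfalso
      have hlt : (i' : ℕ) < a := by
        by_contra hnlt
        exact h' (Finset.mem_filter.2 ⟨hi', hnlt⟩)
      rw [hxlow i' hlt] at heq
      apply hxhigh i h
      rw [heq]
      have : castb ⟨(i' : ℕ), hlt⟩ = i' := by simp [hcastb, Fin.ext_iff]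
      rw [this]; exact hi'
    · exfalso
      have hlt : (i : ℕ) < a := by
        by_contra hnlt
        exact h (Finset.mem_filter.2 ⟨hi, hnlt⟩)
      rw [hxlow i hlt] at heq
      apply hxhigh i' h'
      rw [← heq]
      have : castb ⟨(i : ℕ), hlt⟩ = i := by simp [hcastb, Fin.ext_iff]
      rw [this]; exact hi
    · have hlt : (i : ℕ) < a := by
        by_contra hnlt; exact h (Finset.mem_filter.2 ⟨hi, hnlt⟩)
      have hlt' : (i' : ℕ) < a := by
        by_contra hnlt; exact h' (Finset.mem_filter.2 ⟨hi', hnlt⟩)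
      rw [hxlow i hlt, hxlow i' hlt'] at heq
      exact Fin.ext (by simpa [Fin.ext_iff] using heq)
  -- the witness assignment
  set w : MyVar a b c → K := fun v =>
    match v with
    | .vx i j => if i ∈ S' ∧ j = xival i then 1 else 0
    | .vt i j => if (i ∈ SQ ∧ φ i = j) ∨ (j ∈ SQ ∧ φ j = i) then 1 else 0
    | .vy _ _ => 0
    | .vd _ _ => 0
    | .vc r j => wc r j
    with hw
  have E1 : ∀ i ∈ S', ∀ j, MvPolynomial.eval w (Xm K a b c i j) =
      if j = xival i then 1 else 0 := by
    intro i hi j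
    by_cases hia : (i : ℕ) < a
    · rw [Xm, if_pos hia]
      rw [hxlow i hia]
      by_cases hj : (i : ℕ) = (j : ℕ)
      · rw [if_pos hj, if_pos (Fin.ext hj.symm), _root_.map_one]
      · rw [if_neg hj, if_neg (fun hh => hj (by rw [hh])), _root_.map_zero]
    · rw [Xm, if_neg hia, eval_X]
      simp only [hw]
      by_cases hj : j = xival i
      · rw [if_pos ⟨hi, hj⟩, if_pos hj]
      · rw [if_neg (fun hh => hj hh.2), if_neg hj]
  have E2 : ∀ q ∈ SQ, ∀ k, MvPolynomial.eval w (Tm K a b c q k) =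
      if k = φ q then 1 else 0 := by
    intro q hq k
    rw [Tm, eval_X]
    simp only [hw]
    congr 1
    rw [eq_iff_iff]
    rcases le_total q k with h | h
    · rw [min_eq_left h, max_eq_right h]
      constructor
      · rintro (⟨_, h2⟩ | ⟨hk, h2⟩)
        · exact h2.symm
        · have := hφback q hq k hk h2
          subst this
          exact h2.symm
      · intro h2
        exact Or.inl ⟨hq, h2.symm⟩
    · rw [min_eq_right h, max_eq_left h]
      constructor
      · rintro (⟨hk, h2⟩ | ⟨_, h2⟩)
        · have := hφback q hq k hk h2
          subst this
          exact h2.symm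
        · exact h2.symm
      · intro h2
        exact Or.inr ⟨hq, h2.symm⟩
  have hφS' : ∀ q ∈ SQ, φ q ∈ S' := by
    intro q hq
    exact Finset.mem_union_right _ (Finset.mem_image.2 ⟨q, hq, rfl⟩)
  have E3 : ∀ q ∈ SQ, ∀ j, MvPolynomial.eval w ((Tm K a b c * Xm K a b c) q j) =
      if j = xival (φ q) then 1 else 0 := by
    intro q hq j
    rw [mul_apply, map_sum]
    have : ∀ k : Fin b, MvPolynomial.eval w (Tm K a b c q k * Xm K a b c k j) =
        if k = φ q then MvPolynomial.eval w (Xm K a b c k j) else 0 := by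
      intro k
      rw [_root_.map_mul, E2 q hq k]
      by_cases hk : k = φ q
      · rw [if_pos hk, if_pos hk, one_mul]
      · rw [if_neg hk, if_neg hk, zero_mul]
    rw [Finset.sum_congr rfl (fun k _ => this k), Finset.sum_ite_eq' Finset.univ (φ q)]
    rw [if_pos (Finset.mem_univ _)]
    exact E1 (φ q) (hφS' q hq) j
  -- assemble
  set sproj : Fin b ⊕ Fin b → Fin b := Sum.elim id φ with hsproj
  have hmem : ∀ r ∈ R₀, sproj r ∈ S' := by
    rintro (p | q) hr
    · exact Finset.mem_union_left _ (Finset.mem_toLeft.2 hr)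
    · exact hφS' q (Finset.mem_toRight.2 hr)
  have hrow : ∀ r ∈ R₀, ∀ j, MvPolynomial.eval w (Am K a b c r j) =
      if j = xival (sproj r) then 1 else 0 := by
    rintro (p | q) hr j
    · rw [Am, fromRows_apply_inl]
      exact E1 p (Finset.mem_union_left _ (Finset.mem_toLeft.2 hr)) j
    · rw [Am, fromRows_apply_inr]
      exact E3 q (Finset.mem_toRight.2 hr) j
  have hsprojinj : ∀ r ∈ R₀, ∀ r' ∈ R₀, sproj r = sproj r' → r = r' := by
    rintro (p | q) hr (p' | q') hr' heq
    · simp only [hsproj, Sum.elim_inl, id_eq] at heq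
      rw [heq]
    · exfalso
      simp only [hsproj, Sum.elim_inl, Sum.elim_inr, id_eq] at heq
      exact hφnotSP q' (Finset.mem_toRight.2 hr') (heq ▸ Finset.mem_toLeft.2 hr)
    · exfalso
      simp only [hsproj, Sum.elim_inl, Sum.elim_inr, id_eq] at heq
      exact hφnotSP q (Finset.mem_toRight.2 hr) (heq ▸ Finset.mem_toLeft.2 hr')
    · simp only [hsproj, Sum.elim_inr] at heq
      rw [hφinj q (Finset.mem_toRight.2 hr) q' (Finset.mem_toRight.2 hr') heq]
  refine ⟨w, fun r => xival (sproj r), fun r j => rfl, ?_, ?_⟩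
  · intro r hr
    rw [hrow r hr, if_pos rfl]
  · intro r hr r' hr' hlt
    rw [hrow r' hr', if_neg]
    intro heq
    dsimp only at heq
    have := hxinj _ (hmem r hr) _ (hmem r' hr') heq
    have := hsprojinj r hr r' hr' this
    subst this
    exact lt_irrefl _ hlt

end Stmt15Aux

namespace Stmt15Aux

open MvPolynomial

theorem coreB (K : Type*) [Field K] (a b c : ℕ) (hab : a ≤ b)
    (wc : (Fin b ⊕ Fin b) → Fin c → K)
    (R₀ : Finset (Fin b ⊕ Fin b)) (hR₀ : R₀.card = 2 * b - a) :
    ∃ (w : MyVar a b c → K) (piv : (Fin b ⊕ Fin b) → Fin (2 * b - a)),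
      (∀ r j, w (.vc r j) = wc r j) ∧
      (∀ r ∈ R₀, MvPolynomial.eval w (Bm K a b c r (piv r)) = 1) ∧
      (∀ r ∈ R₀, ∀ r' ∈ R₀, rank0 b r' < rank0 b r →
        MvPolynomial.eval w (Bm K a b c r' (piv r)) = 0) := by
  classical
  set SP := R₀.toLeft with hSP
  set SQ := R₀.toRight with hSQ
  have hPQ : SP.card + SQ.card = 2 * b - a := by
    rw [hSP, hSQ, Finset.card_toLeft_add_card_toRight]; exact hR₀
  have hSPb : SP.card ≤ b := by simpa using Finset.card_le_univ SP
  have hSQb : SQ.card ≤ b := by simpa using Finset.card_le_univ SQ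
  set Qlo := SQ.filter (fun q : Fin b => (q : ℕ) < a) with hQlo
  set Qhi := SQ.filter (fun q : Fin b => ¬(q : ℕ) < a) with hQhi
  set D := Qlo ∩ SP with hD
  set pool1 := (Finset.univ \ SP) \ Qlo with hpool1
  set pool2 := (Finset.univ.filter (fun k : Fin b => ¬(k : ℕ) < a)) \ SQ with hpool2
  have hDSP : D ⊆ SP := Finset.inter_subset_right
  have hDQlo : D ⊆ Qlo := Finset.inter_subset_left
  have hQloSQ : Qlo ⊆ SQ := Finset.filter_subset _ _
  have hQhiSQ : Qhi ⊆ SQ := Finset.filter_subset _ _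
  have hQlo_lt : ∀ q ∈ Qlo, (q : ℕ) < a := fun q hq => (Finset.mem_filter.1 hq).2
  have hQhi_ge : ∀ q ∈ Qhi, ¬(q : ℕ) < a := fun q hq => (Finset.mem_filter.1 hq).2
  have hpool1p : ∀ x ∈ pool1, x ∉ SP ∧ x ∉ Qlo := by
    intro x hx
    simp only [hpool1, Finset.mem_sdiff] at hx
    tauto
  have hpool2p : ∀ x ∈ pool2, a ≤ (x : ℕ) ∧ x ∉ SQ := by
    intro x hx
    simp only [hpool2, Finset.mem_sdiff, Finset.mem_filter] at hx
    exact ⟨Nat.not_lt.1 hx.1.2, hx.2⟩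
  -- capacity
  have hcap : Fintype.card {x // x ∈ D} ≤
      Fintype.card ({x // x ∈ pool1} ⊕ {x // x ∈ pool2}) := by
    rw [Fintype.card_sum]
    simp only [Fintype.card_coe]
    have hfila : (Finset.univ.filter (fun k : Fin b => (k : ℕ) < a)).card = a := by
      have himg : Finset.univ.filter (fun k : Fin b => (k : ℕ) < a)
          = (Finset.univ : Finset (Fin a)).image (Fin.castLE hab) := by
        ext k
        simp only [Finset.mem_filter, Finset.mem_univ, true_and, Finset.mem_image]
        constructor
        · intro hk
          exact ⟨⟨(k : ℕ), hk⟩, by simp [Fin.ext_iff]⟩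
        · rintro ⟨j, rfl⟩
          simp
      rw [himg, Finset.card_image_of_injective _ ((Fin.strictMono_castLE hab).injective)]
      simp
    have hfilhi : (Finset.univ.filter (fun k : Fin b => ¬(k : ℕ) < a)).card = b - a := by
      have := Finset.card_filter_add_card_filter_not
        (s := (Finset.univ : Finset (Fin b))) (p := fun k : Fin b => (k : ℕ) < a)
      simp only [Finset.card_univ, Fintype.card_fin] at this
      omega
    have hp1 : pool1.card = b - (SP ∪ Qlo).card := by
      have : pool1 = Finset.univ \ (SP ∪ Qlo) := by
        ext x
        simp only [hpool1, Finset.mem_sdiff, Finset.mem_univ, true_and, Finset.mem_union]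
        tauto
      rw [this, Finset.card_sdiff_of_subset (Finset.subset_univ _)]
      simp
    have hp2 : pool2.card = (b - a) - Qhi.card := by
      have h1 : pool2 = (Finset.univ.filter (fun k : Fin b => ¬(k : ℕ) < a)) \
          ((Finset.univ.filter (fun k : Fin b => ¬(k : ℕ) < a)) ∩ SQ) := by
        rw [Finset.sdiff_inter_self_left]
      have h2 : (Finset.univ.filter (fun k : Fin b => ¬(k : ℕ) < a)) ∩ SQ = Qhi := by
        ext x
        simp only [Finset.mem_inter, Finset.mem_filter, Finset.mem_univ, true_and, hQhi]
        tauto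
      rw [h1, h2, Finset.card_sdiff_of_subset]
      · rw [hfilhi]
      · rw [← h2]
        exact Finset.inter_subset_left
    have hUc := Finset.card_union_add_card_inter SP Qlo
    have hDc : D.card = (SP ∩ Qlo).card := by rw [hD, Finset.inter_comm]
    have hQc : Qlo.card + Qhi.card = SQ.card :=
      Finset.card_filter_add_card_filter_not _
    have hU_le : (SP ∪ Qlo).card ≤ b := by simpa using Finset.card_le_univ (SP ∪ Qlo)
    have hQhi_le : Qhi.card ≤ b - a := by
      rw [← hfilhi]
      apply Finset.card_le_card
      intro x hx
      simp only [Finset.mem_filter, Finset.mem_univ, true_and]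
      exact hQhi_ge x hx
    omega
  let ψe := embOfCardLe hcap
  set ψY : Fin b → Option (Fin b) := fun q =>
    if h : q ∈ D then
      (match ψe ⟨q, h⟩ with
       | Sum.inl j => some j.1
       | Sum.inr _ => none)
    else none with hψY
  set ψD : Fin b → Option (Fin b) := fun q =>
    if h : q ∈ D then
      (match ψe ⟨q, h⟩ with
       | Sum.inl _ => none
       | Sum.inr k => some k.1)
    else none with hψD
  have hψY_D : ∀ q j, ψY q = some j → q ∈ D := by
    intro q j h
    by_cases hd : q ∈ D
    · exact hd
    · simp [hψY, hd] at h
  have hψD_D : ∀ q k, ψD q = some k → q ∈ D := by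
    intro q k h
    by_cases hd : q ∈ D
    · exact hd
    · simp [hψD, hd] at h
  have hψY_pool : ∀ q j, ψY q = some j → j ∈ pool1 := by
    intro q j h
    have hd := hψY_D q j h
    rcases hm : ψe ⟨q, hd⟩ with j' | k'
    · simp only [hψY, dif_pos hd, hm] at h
      rw [Option.some_inj] at h
      exact h ▸ j'.2
    · simp [hψY, dif_pos hd, hm] at h
  have hψD_pool : ∀ q k, ψD q = some k → k ∈ pool2 := by
    intro q k h
    have hd := hψD_D q k h
    rcases hm : ψe ⟨q, hd⟩ with j' | k'
    · simp [hψD, dif_pos hd, hm] at h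
    · simp only [hψD, dif_pos hd, hm] at h
      rw [Option.some_inj] at h
      exact h ▸ k'.2
  have hψY_inj : ∀ q q' j, ψY q = some j → ψY q' = some j → q = q' := by
    intro q q' j h h'
    have hd := hψY_D q j h
    have hd' := hψY_D q' j h'
    rcases hm : ψe ⟨q, hd⟩ with j1 | k1
    · rcases hm' : ψe ⟨q', hd'⟩ with j2 | k2
      · simp only [hψY, dif_pos hd, hm, dif_pos hd', hm', Option.some_inj] at h h'
        have : ψe ⟨q, hd⟩ = ψe ⟨q', hd'⟩ := by
          rw [hm, hm']
          congr 1
          exact Subtype.ext (h.trans h'.symm)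
        have := ψe.injective this
        exact congrArg Subtype.val this
      · simp [hψY, dif_pos hd', hm'] at h'
    · simp [hψY, dif_pos hd, hm] at h
  have hψD_inj : ∀ q q' k, ψD q = some k → ψD q' = some k → q = q' := by
    intro q q' k h h'
    have hd := hψD_D q k h
    have hd' := hψD_D q' k h'
    rcases hm : ψe ⟨q, hd⟩ with j1 | k1
    · simp [hψD, dif_pos hd, hm] at h
    · rcases hm' : ψe ⟨q', hd'⟩ with j2 | k2
      · simp [hψD, dif_pos hd', hm'] at h'
      · simp only [hψD, dif_pos hd, hm, dif_pos hd', hm', Option.some_inj] at h h'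
        have : ψe ⟨q, hd⟩ = ψe ⟨q', hd'⟩ := by
          rw [hm, hm']
          congr 1
          exact Subtype.ext (h.trans h'.symm)
        have := ψe.injective this
        exact congrArg Subtype.val this
  have hexcl : ∀ q j, ψY q = some j → ψD q = none := by
    intro q j h
    have hd := hψY_D q j h
    rcases hm : ψe ⟨q, hd⟩ with j1 | k1
    · simp [hψD, dif_pos hd, hm]
    · simp [hψY, dif_pos hd, hm] at h
  have hexcl' : ∀ q k, ψD q = some k → ψY q = none := by
    intro q k h
    have hd := hψD_D q k h
    rcases hm : ψe ⟨q, hd⟩ with j1 | k1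
    · simp [hψD, dif_pos hd, hm] at h
    · simp [hψY, dif_pos hd, hm]
  have hψY_notD : ∀ q, q ∉ D → ψY q = none := fun q hq => by simp [hψY, hq]
  have htotal : ∀ q, q ∈ D → (∃ j, ψY q = some j) ∨ (∃ k, ψD q = some k) := by
    intro q hd
    rcases hm : ψe ⟨q, hd⟩ with j1 | k1
    · exact Or.inl ⟨j1.1, by simp [hψY, dif_pos hd, hm]⟩
    · exact Or.inr ⟨k1.1, by simp [hψD, dif_pos hd, hm]⟩
  -- targets
  have hble : b ≤ 2 * b - a := by omega
  set ηY : Fin b → Fin (2 * b - a) := Fin.castLE hble with hηY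
  set ηD : Fin b → Fin (2 * b - a) := fun k => ⟨b + (k : ℕ) - a, by omega⟩ with hηD
  have hηYinj : Function.Injective ηY := (Fin.strictMono_castLE hble).injective
  have hηYD : ∀ i k : Fin b, a ≤ (k : ℕ) → ηY i ≠ ηD k := by
    intro i k hk h
    rw [Fin.ext_iff] at h
    simp only [hηY, hηD, Fin.coe_castLE] at h
    omega
  have hηDinj : ∀ k k' : Fin b, a ≤ (k : ℕ) → a ≤ (k' : ℕ) → ηD k = ηD k' → k = k' := by
    intro k k' hk hk' h
    rw [Fin.ext_iff] at h
    simp only [hηD] at h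
    exact Fin.ext (by omega)
  -- the assignment
  set castb : Fin a → Fin b := Fin.castLE hab with hcastb
  set w : MyVar a b c → K := fun v =>
    match v with
    | .vx k j => if ψD (castb j) = some k then -1 else 0
    | .vt i j =>
        if i = j then (if i ∈ Qlo ∧ i ∉ SP then 1 else 0)
        else if ψY i = some j ∨ ψY j = some i then 1 else 0
    | .vy i j => if j = ηY i then 1 else 0
    | .vd k j => if j = ηD k then 1 else 0
    | .vc r j => wc r j
    with hw
  have G1 : ∀ i j, MvPolynomial.eval w (Ym K a b c i j) = if j = ηY i then 1 else 0 := by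
    intro i j
    rw [Ym, eval_X]
  have G2 : ∀ k j, MvPolynomial.eval w (Dm K a b c k j) =
      if a ≤ (k : ℕ) then (if j = ηD k then 1 else 0) else 0 := by
    intro k j
    by_cases hk : a ≤ (k : ℕ)
    · rw [Dm, if_pos hk, eval_X, if_pos hk]
    · rw [Dm, if_neg hk, if_neg hk, _root_.map_zero]
  have G3 : ∀ q k, MvPolynomial.eval w (Tm K a b c q k) =
      if q = k then (if q ∈ Qlo ∧ q ∉ SP then 1 else 0)
      else if ψY q = some k ∨ ψY k = some q then 1 else 0 := by
    intro q k
    rw [Tm, eval_X]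
    rcases le_total q k with h | h
    · rw [min_eq_left h, max_eq_right h]
    · rw [min_eq_right h, max_eq_left h]
      by_cases hqk : q = k
      · subst hqk
        rfl
      · rw [hw]
        simp only
        rw [if_neg (fun hh => hqk hh.symm), if_neg hqk]
        congr 1
        rw [eq_iff_iff]
        exact or_comm
  have hXval : ∀ (k : Fin b) (q : Fin b) (hq : (q : ℕ) < a),
      MvPolynomial.eval w (Xm K a b c k ⟨(q : ℕ), hq⟩) =
        if (k : ℕ) < a then (if (k : ℕ) = (q : ℕ) then 1 else 0)
        else (if ψD q = some k then -1 else 0) := by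
    intro k q hq
    by_cases hk : (k : ℕ) < a
    · rw [Xm, if_pos hk, if_pos hk]
      by_cases hkq : (k : ℕ) = (q : ℕ)
      · rw [if_pos (by simpa using hkq), if_pos hkq, _root_.map_one]
      · rw [if_neg (by simpa using hkq), if_neg hkq, _root_.map_zero]
    · rw [Xm, if_neg hk, if_neg hk, eval_X]
      have : castb ⟨(q : ℕ), hq⟩ = q := by simp [hcastb, Fin.ext_iff]
      rw [hw]
      simp only
      rw [this]
  have G4term : ∀ (q : Fin b) (hq : (q : ℕ) < a) (k : Fin b) (j : Fin (2 * b - a)),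
      MvPolynomial.eval w (Xm K a b c k ⟨(q : ℕ), hq⟩ * Dm K a b c k j) =
        if ψD q = some k then -(if j = ηD k then 1 else 0) else 0 := by
    intro q hq k j
    rw [_root_.map_mul, hXval k q hq, G2]
    by_cases hk : (k : ℕ) < a
    · rw [if_pos hk, if_neg (Nat.not_le.2 hk), mul_zero, if_neg]
      intro hcon
      exact Nat.not_le.2 hk (hpool2p k (hψD_pool q k hcon)).1
    · rw [if_neg hk, if_pos (Nat.not_lt.1 hk)]
      by_cases hc : ψD q = some k
      · rw [if_pos hc, if_pos hc, neg_one_mul]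
      · rw [if_neg hc, if_neg hc, zero_mul]
  have G4a : ∀ (q : Fin b), (q : ℕ) < a → ψD q = none →
      ∀ j, MvPolynomial.eval w (Um K a b c q j) = 0 := by
    intro q hq hn j
    rw [Um, dif_pos hq, map_neg, map_sum, neg_eq_zero]
    rw [Finset.sum_congr rfl (fun k _ => G4term q hq k j)]
    apply Finset.sum_eq_zero
    intro k _
    rw [if_neg]
    rw [hn]
    simp
  have G4b : ∀ (q : Fin b), (q : ℕ) < a → ∀ k0, ψD q = some k0 →
      ∀ j, MvPolynomial.eval w (Um K a b c q j) = if j = ηD k0 then 1 else 0 := by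
    intro q hq k0 hk0 j
    rw [Um, dif_pos hq, map_neg, map_sum]
    rw [Finset.sum_congr rfl (fun k _ => G4term q hq k j)]
    rw [Finset.sum_eq_single k0]
    · rw [if_pos hk0, neg_neg]
    · intro k _ hkk
      rw [if_neg]
      rw [hk0]
      simp [Option.some_inj]
      exact fun h => hkk h.symm
    · intro h
      exact absurd (Finset.mem_univ _) h
  have G5 : ∀ (q : Fin b), ¬(q : ℕ) < a →
      ∀ j, MvPolynomial.eval w (Um K a b c q j) = if j = ηD q then 1 else 0 := by
    intro q hq j
    rw [Um, dif_neg hq, G2, if_pos (Nat.not_lt.1 hq)]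
  have hTY : ∀ (q : Fin b) (j : Fin (2 * b - a)),
      MvPolynomial.eval w ((Tm K a b c * Ym K a b c) q j) =
      ∑ k : Fin b, MvPolynomial.eval w (Tm K a b c q k) * (if j = ηY k then 1 else 0) := by
    intro q j
    rw [mul_apply, map_sum]
    exact Finset.sum_congr rfl fun k _ => by rw [_root_.map_mul, G1]
  have hBrow : ∀ (q : Fin b) (j : Fin (2 * b - a)),
      MvPolynomial.eval w (Bm K a b c (Sum.inr q) j) =
      (∑ k : Fin b, MvPolynomial.eval w (Tm K a b c q k) * (if j = ηY k then 1 else 0))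
        + MvPolynomial.eval w (Um K a b c q j) := by
    intro q j
    rw [Bm, fromRows_apply_inr, Matrix.add_apply, _root_.map_add, hTY]
  -- row computations
  have HrowA : ∀ q, q ∈ Qlo → q ∉ SP → ∀ j,
      MvPolynomial.eval w (Bm K a b c (Sum.inr q) j) = if j = ηY q then 1 else 0 := by
    intro q hq hqsp j
    rw [hBrow]
    have hqD : q ∉ D := fun h => hqsp (hDSP h)
    have hU : MvPolynomial.eval w (Um K a b c q j) = 0 :=
      G4a q (hQlo_lt q hq) (by simp [hψD, hqD]) j
    rw [hU, add_zero]
    have hT : ∀ k, MvPolynomial.eval w (Tm K a b c q k) = if k = q then 1 else 0 := by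
      intro k
      rw [G3]
      by_cases hk : q = k
      · rw [if_pos hk, if_pos ⟨hq, hqsp⟩, if_pos hk.symm]
      · have hor : ¬(ψY q = some k ∨ ψY k = some q) := by
          rintro (h | h)
          · exact hqD (hψY_D q k h)
          · exact (hpool1p q (hψY_pool k q h)).2 hq
        rw [if_neg hk, if_neg hor, if_neg (fun h => hk h.symm)]
    rw [Finset.sum_congr rfl (fun k _ => by rw [hT k])]
    rw [Finset.sum_eq_single q]
    · simp
    · intro k _ hk
      rw [if_neg hk, zero_mul]
    · intro h
      exact absurd (Finset.mem_univ _) h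
  have HrowB : ∀ q j0, ψY q = some j0 → ∀ j,
      MvPolynomial.eval w (Bm K a b c (Sum.inr q) j) = if j = ηY j0 then 1 else 0 := by
    intro q j0 hqj0 j
    have hqD : q ∈ D := hψY_D q j0 hqj0
    have hqSP : q ∈ SP := hDSP hqD
    have hj0p : j0 ∈ pool1 := hψY_pool q j0 hqj0
    rw [hBrow]
    have hU : MvPolynomial.eval w (Um K a b c q j) = 0 :=
      G4a q (hQlo_lt q (hDQlo hqD)) (hexcl q j0 hqj0) j
    rw [hU, add_zero]
    have hT : ∀ k, MvPolynomial.eval w (Tm K a b c q k) = if k = j0 then 1 else 0 := by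
      intro k
      rw [G3]
      by_cases hk : q = k
      · rw [if_pos hk, if_neg (fun h : q ∈ Qlo ∧ q ∉ SP => h.2 hqSP), if_neg]
        intro hkj0
        exact (hpool1p j0 hj0p).1 (by rw [← hkj0, ← hk]; exact hqSP)
      · rw [if_neg hk]
        by_cases hkj0 : k = j0
        · rw [if_pos hkj0, if_pos (Or.inl (by rw [hqj0, hkj0]))]
        · rw [if_neg hkj0, if_neg]
          rintro (h | h)
          · rw [hqj0, Option.some_inj] at h
            exact hkj0 h.symm
          · exact (hpool1p q (hψY_pool k q h)).1 hqSP
    rw [Finset.sum_congr rfl (fun k _ => by rw [hT k])]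
    rw [Finset.sum_eq_single j0]
    · simp
    · intro k _ hk
      rw [if_neg hk, zero_mul]
    · intro h
      exact absurd (Finset.mem_univ _) h
  have HrowC : ∀ q k0, ψD q = some k0 → ∀ j,
      MvPolynomial.eval w (Bm K a b c (Sum.inr q) j) = if j = ηD k0 then 1 else 0 := by
    intro q k0 hqk0 j
    have hqD : q ∈ D := hψD_D q k0 hqk0
    have hqSP : q ∈ SP := hDSP hqD
    rw [hBrow]
    have hU := G4b q (hQlo_lt q (hDQlo hqD)) k0 hqk0 j
    rw [hU]
    have hT : ∀ k, MvPolynomial.eval w (Tm K a b c q k) = 0 := by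
      intro k
      rw [G3]
      by_cases hk : q = k
      · rw [if_pos hk, if_neg (fun h : q ∈ Qlo ∧ q ∉ SP => h.2 hqSP)]
      · rw [if_neg hk, if_neg]
        rintro (h | h)
        · rw [hexcl' q k0 hqk0] at h
          exact absurd h (Option.some_ne_none k).symm
        · exact (hpool1p q (hψY_pool k q h)).1 hqSP
    rw [Finset.sum_congr rfl (fun k _ => by rw [hT k, zero_mul])]
    rw [Finset.sum_const_zero, zero_add]
  have HrowD : ∀ q, q ∈ Qhi → ∀ j,
      MvPolynomial.eval w (Bm K a b c (Sum.inr q) j) =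
      (∑ k : Fin b, (if ψY k = some q then 1 else 0) * (if j = ηY k then 1 else 0))
        + (if j = ηD q then 1 else 0) := by
    intro q hq j
    have hqa : ¬(q : ℕ) < a := hQhi_ge q hq
    have hqD : q ∉ D := fun h => hqa (hQlo_lt q (hDQlo h))
    rw [hBrow, G5 q hqa]
    congr 1
    apply Finset.sum_congr rfl
    intro k _
    congr 1
    rw [G3]
    by_cases hk : q = k
    · have hor : ¬(ψY k = some q) := by
        intro hcon
        exact hqD (by rw [hk]; exact hψY_D k q hcon)
      rw [if_pos hk, if_neg (fun h : q ∈ Qlo ∧ q ∉ SP => hqa (hQlo_lt q h.1)), if_neg hor]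
    · rw [if_neg hk]
      have : ψY q = none := hψY_notD q hqD
      congr 1
      rw [eq_iff_iff]
      constructor
      · rintro (h | h)
        · rw [this] at h
          exact absurd h (Option.some_ne_none k).symm
        · exact h
      · intro h
        exact Or.inr h
  -- pivots
  set pivq : Fin b → Fin (2 * b - a) := fun q =>
    if h : q ∈ D then
      (match ψe ⟨q, h⟩ with
       | Sum.inl j => ηY j.1
       | Sum.inr k => ηD k.1)
    else if (q : ℕ) < a then ηY q else ηD q
    with hpivq
  have hpivY : ∀ q j0, ψY q = some j0 → pivq q = ηY j0 := by
    intro q j0 h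
    have hd := hψY_D q j0 h
    rcases hm : ψe ⟨q, hd⟩ with j1 | k1
    · simp only [hψY, dif_pos hd, hm, Option.some_inj] at h
      simp only [hpivq, dif_pos hd, hm, h]
    · simp [hψY, dif_pos hd, hm] at h
  have hpivD : ∀ q k0, ψD q = some k0 → pivq q = ηD k0 := by
    intro q k0 h
    have hd := hψD_D q k0 h
    rcases hm : ψe ⟨q, hd⟩ with j1 | k1
    · simp [hψD, dif_pos hd, hm] at h
    · simp only [hψD, dif_pos hd, hm, Option.some_inj] at h
      simp only [hpivq, dif_pos hd, hm, h]
  have hpivnotD : ∀ q, q ∉ D → pivq q = if (q : ℕ) < a then ηY q else ηD q := by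
    intro q h
    simp only [hpivq, dif_neg h]
  -- classification lemmas
  have c1 : ∀ q ∈ SQ, ∀ p : Fin b, pivq q = ηY p →
      p ∉ SP ∧ ((q ∉ D ∧ p = q ∧ (q : ℕ) < a) ∨ ψY q = some p) := by
    intro q hq p hpiv
    by_cases hd : q ∈ D
    · rcases hm : ψe ⟨q, hd⟩ with j1 | k1
      · simp only [hpivq, dif_pos hd, hm] at hpiv
        have : j1.1 = p := hηYinj hpiv
        constructor
        · rw [← this]
          exact (hpool1p j1.1 j1.2).1
        · right
          simp [hψY, dif_pos hd, hm, this]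
      · simp only [hpivq, dif_pos hd, hm] at hpiv
        exact absurd hpiv.symm (hηYD p k1.1 (hpool2p k1.1 k1.2).1)
    · rw [hpivnotD q hd] at hpiv
      by_cases hqa : (q : ℕ) < a
      · rw [if_pos hqa] at hpiv
        have : q = p := hηYinj hpiv
        subst this
        refine ⟨?_, Or.inl ⟨hd, rfl, hqa⟩⟩
        intro hqSP
        exact hd (Finset.mem_inter.2 ⟨Finset.mem_filter.2 ⟨hq, hqa⟩, hqSP⟩)
      · rw [if_neg hqa] at hpiv
        exact absurd hpiv.symm (hηYD p q (Nat.not_lt.1 hqa))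
  have c2 : ∀ q ∈ SQ, ∀ k : Fin b, a ≤ (k : ℕ) → pivq q = ηD k →
      (ψD q = some k) ∨ (q ∉ D ∧ k = q ∧ ¬(q : ℕ) < a) := by
    intro q _ k hka hpiv
    by_cases hd : q ∈ D
    · rcases hm : ψe ⟨q, hd⟩ with j1 | k1
      · simp only [hpivq, dif_pos hd, hm] at hpiv
        exact absurd hpiv (hηYD j1.1 k hka)
      · simp only [hpivq, dif_pos hd, hm] at hpiv
        have : k1.1 = k := hηDinj _ _ (hpool2p k1.1 k1.2).1 hka hpiv
        left
        simp [hψD, dif_pos hd, hm, this]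
    · rw [hpivnotD q hd] at hpiv
      by_cases hqa : (q : ℕ) < a
      · rw [if_pos hqa] at hpiv
        exact absurd hpiv (hηYD q k hka)
      · rw [if_neg hqa] at hpiv
        right
        exact ⟨hd, (hηDinj _ _ (Nat.not_lt.1 hqa) hka hpiv).symm, hqa⟩
  have c3 : ∀ q, (∃ p : Fin b, pivq q = ηY p) ∨
      (∃ k : Fin b, a ≤ (k : ℕ) ∧ pivq q = ηD k) := by
    intro q
    by_cases hd : q ∈ D
    · rcases hm : ψe ⟨q, hd⟩ with j1 | k1
      · exact Or.inl ⟨j1.1, by simp [hpivq, dif_pos hd, hm]⟩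
      · exact Or.inr ⟨k1.1, (hpool2p k1.1 k1.2).1, by simp [hpivq, dif_pos hd, hm]⟩
    · by_cases hqa : (q : ℕ) < a
      · exact Or.inl ⟨q, by simp [hpivnotD q hd, hqa]⟩
      · exact Or.inr ⟨q, Nat.not_lt.1 hqa, by simp [hpivnotD q hd, hqa]⟩
  have hpivSP : ∀ q ∈ SQ, ∀ p ∈ SP, pivq q ≠ ηY p := by
    intro q hq p hp hcon
    exact (c1 q hq p hcon).1 hp
  set piv : Fin b ⊕ Fin b → Fin (2 * b - a) := Sum.elim ηY pivq with hpiv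
  have hpivinj : ∀ r ∈ R₀, ∀ r' ∈ R₀, piv r = piv r' → r = r' := by
    rintro (p | q) hr (p' | q') hr' heq
    · simp only [hpiv, Sum.elim_inl] at heq
      rw [hηYinj heq]
    · exfalso
      simp only [hpiv, Sum.elim_inl, Sum.elim_inr] at heq
      exact hpivSP q' (Finset.mem_toRight.2 hr') p (Finset.mem_toLeft.2 hr) heq.symm
    · exfalso
      simp only [hpiv, Sum.elim_inl, Sum.elim_inr] at heq
      exact hpivSP q (Finset.mem_toRight.2 hr) p' (Finset.mem_toLeft.2 hr') heq
    · simp only [hpiv, Sum.elim_inr] at heq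
      have hqSQ : q ∈ SQ := Finset.mem_toRight.2 hr
      have hqSQ' : q' ∈ SQ := Finset.mem_toRight.2 hr'
      congr 1
      rcases c3 q with ⟨p, hp⟩ | ⟨k, hka, hk⟩
      · have hp' : pivq q' = ηY p := by rw [← heq, hp]
        obtain ⟨hpSP, hc⟩ := c1 q hqSQ p hp
        obtain ⟨_, hc'⟩ := c1 q' hqSQ' p hp'
        rcases hc with ⟨hqD, hpq, hqa⟩ | hqψ
        · rcases hc' with ⟨_, hpq', _⟩ | hq'ψ
          · rw [← hpq, ← hpq']
          · exfalso
            have := hψY_pool q' p hq'ψ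
            rw [hpq] at this
            exact (hpool1p q this).2 (Finset.mem_filter.2 ⟨hqSQ, hpq ▸ hqa⟩)
        · rcases hc' with ⟨hq'D, hpq', hq'a⟩ | hq'ψ
          · exfalso
            have := hψY_pool q p hqψ
            rw [hpq'] at this
            exact (hpool1p q' this).2 (Finset.mem_filter.2 ⟨hqSQ', hq'a⟩)
          · exact hψY_inj q q' p hqψ hq'ψ
      · have hk' : pivq q' = ηD k := by rw [← heq, hk]
        rcases c2 q hqSQ k hka hk with hqψ | ⟨hqD, hkq, hqa⟩
        · rcases c2 q' hqSQ' k hka hk' with hq'ψ | ⟨hq'D, hkq', hq'a⟩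
          · exact hψD_inj q q' k hqψ hq'ψ
          · exfalso
            have := (hpool2p k (hψD_pool q k hqψ)).2
            rw [hkq'] at this
            exact this hqSQ'
        · rcases c2 q' hqSQ' k hka hk' with hq'ψ | ⟨hq'D, hkq', hq'a⟩
          · exfalso
            have := (hpool2p k (hψD_pool q' k hq'ψ)).2
            rw [hkq] at this
            exact this hqSQ
          · rw [← hkq, ← hkq']
  -- single-pivot row formula for Qlo rows
  have hrow_single : ∀ q ∈ Qlo, ∀ j,
      MvPolynomial.eval w (Bm K a b c (Sum.inr q) j) = if j = pivq q then 1 else 0 := by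
    intro q hq j
    by_cases hqsp : q ∈ SP
    · have hqD : q ∈ D := Finset.mem_inter.2 ⟨hq, hqsp⟩
      rcases htotal q hqD with ⟨j0, hj0⟩ | ⟨k0, hk0⟩
      · rw [HrowB q j0 hj0 j, hpivY q j0 hj0]
      · rw [HrowC q k0 hk0 j, hpivD q k0 hk0]
    · have hqD : q ∉ D := fun h => hqsp (hDSP h)
      rw [HrowA q hq hqsp j, hpivnotD q hqD, if_pos (hQlo_lt q hq)]
  refine ⟨w, piv, fun r j => rfl, ?_, ?_⟩
  · rintro (p | q) hr
    · rw [Bm, fromRows_apply_inl, G1, hpiv]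
      simp
    · have hqSQ : q ∈ SQ := Finset.mem_toRight.2 hr
      by_cases hqa : (q : ℕ) < a
      · have hq : q ∈ Qlo := Finset.mem_filter.2 ⟨hqSQ, hqa⟩
        rw [hpiv, Sum.elim_inr, hrow_single q hq, if_pos rfl]
      · have hq : q ∈ Qhi := Finset.mem_filter.2 ⟨hqSQ, hqa⟩
        have hqD : q ∉ D := fun h => hqa (hQlo_lt q (hDQlo h))
        have hpq : pivq q = ηD q := by rw [hpivnotD q hqD, if_neg hqa]
        rw [hpiv, Sum.elim_inr, HrowD q hq, hpq]
        rw [if_pos rfl]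
        have : ∀ k : Fin b, (if ψY k = some q then (1:K) else 0) *
            (if ηD q = ηY k then 1 else 0) = 0 := by
          intro k
          have hne : ¬(ηD q = ηY k) := fun h => hηYD k q (Nat.not_lt.1 hqa) h.symm
          rw [if_neg hne, mul_zero]
        rw [Finset.sum_congr rfl (fun k _ => this k), Finset.sum_const_zero, zero_add]
  · rintro (p | q) hr r' hr' hlt
    · -- r = inl p; r' must be inl as well
      rcases r' with p' | q'
      · simp only [rank0, Sum.elim_inl] at hlt
        rw [Bm, fromRows_apply_inl, G1, hpiv, Sum.elim_inl, if_neg]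
        intro hcon
        have := hηYinj hcon
        subst this
        exact lt_irrefl _ hlt
      · exfalso
        simp only [rank0, Sum.elim_inl, Sum.elim_inr] at hlt
        have := p.2
        omega
    · -- r = inr q
      have hqSQ : q ∈ SQ := Finset.mem_toRight.2 hr
      rcases r' with p' | q'
      · -- earlier top row
        rw [Bm, fromRows_apply_inl, G1, hpiv, Sum.elim_inr, if_neg]
        intro hcon
        exact hpivSP q hqSQ p' (Finset.mem_toLeft.2 hr') hcon
      · -- earlier bottom row
        have hq'SQ : q' ∈ SQ := Finset.mem_toRight.2 hr'
        have hnem : (Sum.inr q' : Fin b ⊕ Fin b) ≠ Sum.inr q := by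
          intro hcon
          rw [hcon] at hlt
          exact lt_irrefl _ hlt
        have hpivne : piv (Sum.inr q) ≠ piv (Sum.inr q') := by
          intro hcon
          exact hnem (hpivinj _ hr _ hr' hcon).symm
        by_cases hq'a : (q' : ℕ) < a
        · have hq' : q' ∈ Qlo := Finset.mem_filter.2 ⟨hq'SQ, hq'a⟩
          rw [hrow_single q' hq', if_neg]
          intro hcon
          apply hpivne
          simp only [hpiv, Sum.elim_inr] at hcon ⊢
          rw [hcon]
        · have hq' : q' ∈ Qhi := Finset.mem_filter.2 ⟨hq'SQ, hq'a⟩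
          have hq'D : q' ∉ D := fun h => hq'a (hQlo_lt q' (hDQlo h))
          have hpq' : pivq q' = ηD q' := by rw [hpivnotD q' hq'D, if_neg hq'a]
          rw [HrowD q' hq']
          have h2 : (if piv (Sum.inr q) = ηD q' then (1:K) else 0) = 0 := by
            rw [if_neg]
            intro hcon
            apply hpivne
            simp only [hpiv, Sum.elim_inr] at hcon ⊢
            rw [hcon, hpq']
          have h1 : ∀ k : Fin b, (if ψY k = some q' then (1:K) else 0) *
              (if piv (Sum.inr q) = ηY k then 1 else 0) = 0 := by
            intro k
            by_cases hc : ψY k = some q'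
            · have hne : ¬(piv (Sum.inr q) = ηY k) := by
                intro hcon
                have hkD : k ∈ D := hψY_D k q' hc
                exact hpivSP q hqSQ k (hDSP hkD) (by simpa [hpiv] using hcon)
              rw [if_neg hne, mul_zero]
            · rw [if_neg hc, zero_mul]
          rw [Finset.sum_congr rfl (fun k _ => h1 k), Finset.sum_const_zero, zero_add, h2]

end Stmt15Aux

namespace Stmt15Aux

open MvPolynomial

theorem outer (K : Type*) [Field K] (a b c m : ℕ)
    (M : Matrix (Fin b ⊕ Fin b) (Fin m) (MvPolynomial (MyVar a b c) K))
    (core : ∀ (wc : (Fin b ⊕ Fin b) → Fin c → K) (R₀ : Finset (Fin b ⊕ Fin b)),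
      R₀.card = m →
      ∃ (w : MyVar a b c → K) (piv : (Fin b ⊕ Fin b) → Fin m),
        (∀ r j, w (.vc r j) = wc r j) ∧
        (∀ r ∈ R₀, MvPolynomial.eval w (M r (piv r)) = 1) ∧
        (∀ r ∈ R₀, ∀ r' ∈ R₀, rank0 b r' < rank0 b r →
          MvPolynomial.eval w (M r' (piv r)) = 0))
    (c' : ℕ) (hc' : c' ≤ c) (R : Finset (Fin b ⊕ Fin b)) (hR : R.card = m + c') :
    ∃ w : MyVar a b c → K,
      LinearIndependent K fun r : {x // x ∈ R} => fun j : Fin m ⊕ Fin c' =>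
        MvPolynomial.eval w
          (Sum.elim (fun jm => M r.1 jm)
            (fun jc => Cm K a b c r.1 (Fin.castLE hc' jc)) j) := by
  classical
  obtain ⟨R₀, hsub, hR₀⟩ := Finset.exists_subset_card_eq (show m ≤ R.card by omega)
  set junk := R \ R₀ with hjunkdef
  have hjunk : junk.card = c' := by
    rw [hjunkdef, Finset.card_sdiff_of_subset hsub]
    omega
  set σ : {x // x ∈ junk} → Fin c' := fun x =>
    Fintype.equivFinOfCardEq (by rw [Fintype.card_coe]; exact hjunk) x with hσ
  have hσinj : ∀ x y, σ x = σ y → x = y := by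
    intro x y h
    exact (Fintype.equivFinOfCardEq (by rw [Fintype.card_coe]; exact hjunk)).injective h
  set wc : (Fin b ⊕ Fin b) → Fin c → K := fun r j =>
    if h : r ∈ junk then (if (j : ℕ) = ((σ ⟨r, h⟩ : Fin c') : ℕ) then 1 else 0) else 0
    with hwcdef
  obtain ⟨w, piv, hwc, hdiag, htri⟩ := core wc R₀ hR₀
  refine ⟨w, ?_⟩
  apply pivot_li _ (fun r : {x // x ∈ R} =>
      if r.1 ∈ R₀ then rank0 b r.1 else 2 * b + rank0 b r.1) ?_
    (fun r => if h : r.1 ∈ R₀ then Sum.inl (piv r.1)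
      else Sum.inr (σ ⟨r.1, Finset.mem_sdiff.2 ⟨r.2, h⟩⟩)) ?_ ?_
  · -- injectivity of the rank function
    intro r r' h
    apply Subtype.ext
    by_cases h1 : r.1 ∈ R₀ <;> by_cases h2 : r'.1 ∈ R₀ <;>
      simp only [h1, h2, if_pos, if_neg, if_true, if_false] at h
    · exact rank0_inj h
    · exact absurd h (by have := rank0_lt (b := b) r.1; omega)
    · exact absurd h (by have := rank0_lt (b := b) r'.1; omega)
    · exact rank0_inj (by omega)
  · -- diagonal
    intro r
    by_cases h : r.1 ∈ R₀
    · rw [dif_pos h]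
      exact hdiag r.1 h
    · rw [dif_neg h]
      have hj : r.1 ∈ junk := Finset.mem_sdiff.2 ⟨r.2, h⟩
      show MvPolynomial.eval w (Cm K a b c r.1 (Fin.castLE hc' _)) = 1
      rw [Cm, eval_X, hwc, hwcdef]
      simp only [dif_pos hj]
      rw [if_pos (by simp)]
  · -- triangularity
    intro i j hlt
    by_cases hi : i.1 ∈ R₀
    · have hj : j.1 ∈ R₀ := by
        by_contra hjn
        simp only [hi, hjn, if_true, if_false] at hlt
        have := rank0_lt (b := b) i.1
        omega
      rw [dif_pos hi]
      simp only [hi, hj, if_true] at hlt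
      exact htri i.1 hi j.1 hj hlt
    · rw [dif_neg hi]
      show MvPolynomial.eval w (Cm K a b c j.1 (Fin.castLE hc' _)) = 0
      rw [Cm, eval_X, hwc, hwcdef]
      by_cases hj : j.1 ∈ R₀
      · have : j.1 ∉ junk := fun hcon => (Finset.mem_sdiff.1 hcon).2 hj
        simp only [dif_neg this]
      · have hjj : j.1 ∈ junk := Finset.mem_sdiff.2 ⟨j.2, hj⟩
        simp only [dif_pos hjj]
        rw [if_neg]
        simp only [Fin.coe_castLE]
        intro hcon
        have : σ ⟨i.1, Finset.mem_sdiff.2 ⟨i.2, hi⟩⟩ = σ ⟨j.1, hjj⟩ := Fin.ext hcon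
        have h2 := hσinj _ _ this
        have h3 : (i.1 : Fin b ⊕ Fin b) = j.1 := Subtype.mk_eq_mk.mp h2
        have hij : i = j := Subtype.ext h3
        rw [hij] at hlt
        exact lt_irrefl _ hlt

/-- The square polynomial matrix attached to a family member. -/
noncomputable def rEquiv {α : Type*} [DecidableEq α] (R : Finset α) {n : ℕ}
    (hR : R.card = n) : {x // x ∈ R} ≃ Fin n :=
  Fintype.equivFinOfCardEq (by rw [Fintype.card_coe]; exact hR)

noncomputable def sqM {K : Type*} [Field K] {a b c : ℕ} {m c' : ℕ}
    (M : Matrix (Fin b ⊕ Fin b) (Fin m) (MvPolynomial (MyVar a b c) K))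
    (hc' : c' ≤ c) (R : Finset (Fin b ⊕ Fin b)) (hR : R.card = m + c') :
    Matrix (Fin (m + c')) (Fin (m + c')) (MvPolynomial (MyVar a b c) K) :=
  Matrix.of fun i j =>
    Sum.elim (fun jm => M (((rEquiv R hR).symm i) : Fin b ⊕ Fin b) jm)
      (fun jc => Cm K a b c (((rEquiv R hR).symm i) : Fin b ⊕ Fin b) (Fin.castLE hc' jc))
      (finSumFinEquiv.symm j)

theorem li_iff_sq {K : Type*} [Field K] {a b c : ℕ} {m c' : ℕ}
    (M : Matrix (Fin b ⊕ Fin b) (Fin m) (MvPolynomial (MyVar a b c) K))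
    (hc' : c' ≤ c) (R : Finset (Fin b ⊕ Fin b)) (hR : R.card = m + c')
    (w : MyVar a b c → K) :
    (LinearIndependent K fun r : {x // x ∈ R} => fun j : Fin m ⊕ Fin c' =>
        MvPolynomial.eval w
          (Sum.elim (fun jm => M r.1 jm)
            (fun jc => Cm K a b c r.1 (Fin.castLE hc' jc)) j)) ↔
      MvPolynomial.eval w (sqM M hc' R hR).det ≠ 0 := by
  classical
  rw [li_iff_det _ (rEquiv R hR) finSumFinEquiv]
  rw [RingHom.map_det]
  rfl

end Stmt15Aux

namespace Stmt15Aux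

open MvPolynomial

theorem mainK (K : Type*) [Field K] [Infinite K] (a b c : ℕ)
    (ha : 0 < a) (hab : a ≤ b) :
    ∃ (A : Matrix (Fin b ⊕ Fin b) (Fin a) K)
      (B : Matrix (Fin b ⊕ Fin b) (Fin (2 * b - a)) K)
      (C : Matrix (Fin b ⊕ Fin b) (Fin c) K),
      Aᵀ * (fromBlocks (0 : Matrix (Fin b) (Fin b) K) (-1 : Matrix (Fin b) (Fin b) K) (1 : Matrix (Fin b) (Fin b) K) 0) * A
        = (0 : Matrix (Fin a) (Fin a) K) ∧
      Aᵀ * (fromBlocks (0 : Matrix (Fin b) (Fin b) K) (-1 : Matrix (Fin b) (Fin b) K) (1 : Matrix (Fin b) (Fin b) K) 0) * B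
        = (0 : Matrix (Fin a) (Fin (2 * b - a)) K) ∧
      (∀ (c' : ℕ) (hc' : c' ≤ c) (R : Finset (Fin b ⊕ Fin b)), R.card = a + c' →
        LinearIndependent K fun r : {x // x ∈ R} => fun j : Fin a ⊕ Fin c' =>
          Sum.elim (A r.1) (fun jc => C r.1 (Fin.castLE hc' jc)) j) ∧
      (∀ (c' : ℕ) (hc' : c' ≤ c) (R : Finset (Fin b ⊕ Fin b)), R.card = (2 * b - a) + c' →
        LinearIndependent K fun r : {x // x ∈ R} => fun j : Fin (2 * b - a) ⊕ Fin c' =>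
          Sum.elim (B r.1) (fun jc => C r.1 (Fin.castLE hc' jc)) j) := by
  classical
  -- index types for the two families of minors
  let IdxA := Σ c' : Fin (c + 1), {R : Finset (Fin b ⊕ Fin b) // R.card = a + (c' : ℕ)}
  let IdxB := Σ c' : Fin (c + 1),
    {R : Finset (Fin b ⊕ Fin b) // R.card = (2 * b - a) + (c' : ℕ)}
  let FA : IdxA → MvPolynomial (MyVar a b c) K := fun x =>
    (sqM (Am K a b c) (Nat.lt_succ_iff.mp x.1.isLt) x.2.1 x.2.2).det
  let FB : IdxB → MvPolynomial (MyVar a b c) K := fun x =>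
    (sqM (Bm K a b c) (Nat.lt_succ_iff.mp x.1.isLt) x.2.1 x.2.2).det
  have hFA : ∀ x, FA x ≠ 0 := by
    intro x
    obtain ⟨w, hw⟩ := outer K a b c a (Am K a b c) (coreA K a b c ha hab)
      (x.1 : ℕ) (Nat.lt_succ_iff.mp x.1.isLt) x.2.1 x.2.2
    intro h0
    have := (li_iff_sq (Am K a b c) (Nat.lt_succ_iff.mp x.1.isLt) x.2.1 x.2.2 w).mp hw
    apply this
    rw [show (sqM (Am K a b c) (Nat.lt_succ_iff.mp x.1.isLt) x.2.1 x.2.2).det = FA x from rfl,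
      h0, _root_.map_zero]
  have hFB : ∀ x, FB x ≠ 0 := by
    intro x
    obtain ⟨w, hw⟩ := outer K a b c (2 * b - a) (Bm K a b c) (coreB K a b c hab)
      (x.1 : ℕ) (Nat.lt_succ_iff.mp x.1.isLt) x.2.1 x.2.2
    intro h0
    have := (li_iff_sq (Bm K a b c) (Nat.lt_succ_iff.mp x.1.isLt) x.2.1 x.2.2 w).mp hw
    apply this
    rw [show (sqM (Bm K a b c) (Nat.lt_succ_iff.mp x.1.isLt) x.2.1 x.2.2).det = FB x from rfl,
      h0, _root_.map_zero]
  have hG : (∏ x : IdxA, FA x) * (∏ x : IdxB, FB x) ≠ 0 :=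
    mul_ne_zero (Finset.prod_ne_zero_iff.2 fun x _ => hFA x)
      (Finset.prod_ne_zero_iff.2 fun x _ => hFB x)
  obtain ⟨w₀, hw₀⟩ := exists_eval_ne_zero_poly hG
  rw [_root_.map_mul, map_prod, map_prod] at hw₀
  have hevA : ∀ x : IdxA, MvPolynomial.eval w₀ (FA x) ≠ 0 := by
    intro x h0
    apply hw₀
    rw [Finset.prod_eq_zero (Finset.mem_univ x) h0, zero_mul]
  have hevB : ∀ x : IdxB, MvPolynomial.eval w₀ (FB x) ≠ 0 := by
    intro x h0
    apply hw₀
    rw [Finset.prod_eq_zero (Finset.mem_univ x) h0, mul_zero]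
  -- the final matrices over K
  refine ⟨(Am K a b c).map (MvPolynomial.eval w₀), (Bm K a b c).map (MvPolynomial.eval w₀),
    (Cm K a b c).map (MvPolynomial.eval w₀), ?_, ?_, ?_, ?_⟩
  · have h := AmJmAm K a b c
    have hmap := congrArg (fun M => M.map (MvPolynomial.eval w₀)) h
    rw [Matrix.map_mul, Matrix.map_mul] at hmap
    have hJ : (Jm K a b c).map (MvPolynomial.eval w₀)
        = fromBlocks (0 : Matrix (Fin b) (Fin b) K) (-1 : Matrix (Fin b) (Fin b) K) 1 0 := by
      ext x y
      rcases x with i | i <;> rcases y with j | j <;>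
        simp [Jm, Matrix.map_apply, Matrix.one_apply, Matrix.neg_apply,
          apply_ite (MvPolynomial.eval w₀)]
    have hT : ((Am K a b c)ᵀ).map (MvPolynomial.eval w₀)
        = ((Am K a b c).map (MvPolynomial.eval w₀))ᵀ := by
      ext i j; rfl
    rw [hJ, hT] at hmap
    have hz : (0 : Matrix (Fin a) (Fin a) (MvPolynomial (MyVar a b c) K)).map
        (MvPolynomial.eval w₀) = (0 : Matrix (Fin a) (Fin a) K) := by
      ext i j; simp
    rw [hz] at hmap
    exact hmap
  · have h := AmJmBm K a b c hab
    have hmap := congrArg (fun M => M.map (MvPolynomial.eval w₀)) h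
    rw [Matrix.map_mul, Matrix.map_mul] at hmap
    have hJ : (Jm K a b c).map (MvPolynomial.eval w₀)
        = fromBlocks (0 : Matrix (Fin b) (Fin b) K) (-1 : Matrix (Fin b) (Fin b) K) 1 0 := by
      ext x y
      rcases x with i | i <;> rcases y with j | j <;>
        simp [Jm, Matrix.map_apply, Matrix.one_apply, Matrix.neg_apply,
          apply_ite (MvPolynomial.eval w₀)]
    have hT : ((Am K a b c)ᵀ).map (MvPolynomial.eval w₀)
        = ((Am K a b c).map (MvPolynomial.eval w₀))ᵀ := by
      ext i j; rfl
    rw [hJ, hT] at hmap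
    have hz : (0 : Matrix (Fin a) (Fin (2 * b - a)) (MvPolynomial (MyVar a b c) K)).map
        (MvPolynomial.eval w₀) = (0 : Matrix (Fin a) (Fin (2 * b - a)) K) := by
      ext i j; simp
    rw [hz] at hmap
    exact hmap
  · intro c' hc' R hR
    have hidx : R.card = a + ((⟨c', Nat.lt_succ_iff.mpr hc'⟩ : Fin (c + 1)) : ℕ) := hR
    have := hevA ⟨⟨c', Nat.lt_succ_iff.mpr hc'⟩, ⟨R, hidx⟩⟩
    have hli := (li_iff_sq (Am K a b c)
      (Nat.lt_succ_iff.mp (⟨c', Nat.lt_succ_iff.mpr hc'⟩ : Fin (c + 1)).isLt)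
      R hidx w₀).mpr this
    have heq : (fun r : {x // x ∈ R} => fun j : Fin a ⊕ Fin c' =>
        Sum.elim ((Am K a b c).map (MvPolynomial.eval w₀) r.1)
          (fun jc => (Cm K a b c).map (MvPolynomial.eval w₀) r.1 (Fin.castLE hc' jc)) j)
        = (fun r : {x // x ∈ R} => fun j : Fin a ⊕ Fin c' =>
            MvPolynomial.eval w₀ (Sum.elim (fun jm => Am K a b c r.1 jm)
              (fun jc => Cm K a b c r.1 (Fin.castLE hc' jc)) j)) := by
      funext r j
      rcases j with jm | jc <;> rfl
    rw [heq]
    exact hli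
  · intro c' hc' R hR
    have hidx : R.card = (2 * b - a) + ((⟨c', Nat.lt_succ_iff.mpr hc'⟩ : Fin (c + 1)) : ℕ) := hR
    have := hevB ⟨⟨c', Nat.lt_succ_iff.mpr hc'⟩, ⟨R, hidx⟩⟩
    have hli := (li_iff_sq (Bm K a b c)
      (Nat.lt_succ_iff.mp (⟨c', Nat.lt_succ_iff.mpr hc'⟩ : Fin (c + 1)).isLt)
      R hidx w₀).mpr this
    have heq : (fun r : {x // x ∈ R} => fun j : Fin (2 * b - a) ⊕ Fin c' =>
        Sum.elim ((Bm K a b c).map (MvPolynomial.eval w₀) r.1)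
          (fun jc => (Cm K a b c).map (MvPolynomial.eval w₀) r.1 (Fin.castLE hc' jc)) j)
        = (fun r : {x // x ∈ R} => fun j : Fin (2 * b - a) ⊕ Fin c' =>
            MvPolynomial.eval w₀ (Sum.elim (fun jm => Bm K a b c r.1 jm)
              (fun jc => Cm K a b c r.1 (Fin.castLE hc' jc)) j)) := by
      funext r j
      rcases j with jm | jc <;> rfl
    rw [heq]
    exact hli

end Stmt15Aux


/-- for every prime `p` and positive integers `a ≤ b` and `c` with
`a + c ≤ 2b`, there exist a power `q = p^s` and matrices `A ∈ 𝔽_q^{2b×a}`,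
`B ∈ 𝔽_q^{2b×(2b−a)}`, `C ∈ 𝔽_q^{2b×c}` such that `AᵀJA = 0`, `AᵀJB = 0`,
`A` is a `(2b,a)`-MDS code, `B` is a `(2b,2b−a)`-MDS code, (N5) `(A,C)` is a
`(2b,a+c)`-MDS code, (N6) `(A, C^{(s')})` is a `(2b,a+s')`-MDS code for every
`1 ≤ s' ≤ c` (with `C^{(s')}` the first `s'` columns of `C`), and (N7) if
moreover `c ≤ a`, `(B,C)` is a `(2b, 2b−a+c)`-MDS code. -/
theorem stmt15 (p : ℕ) [Fact p.Prime] (a b c : ℕ)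
    (ha : 0 < a) (hab : a ≤ b) (hc : 0 < c) (hac : a + c ≤ 2 * b) :
    ∃ s : ℕ, 0 < s ∧
      ∃ (A : Matrix (Fin b ⊕ Fin b) (Fin a) (GaloisField p s))
        (B : Matrix (Fin b ⊕ Fin b) (Fin (2 * b - a)) (GaloisField p s))
        (C : Matrix (Fin b ⊕ Fin b) (Fin c) (GaloisField p s)),
        Aᵀ * sympJ (GaloisField p s) b * A = 0 ∧
        Aᵀ * sympJ (GaloisField p s) b * B = 0 ∧
        IsMDS a A ∧
        IsMDS (2 * b - a) B ∧
        IsMDS (a + c) (Matrix.fromCols A C) ∧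
        (∀ (s' : ℕ) (_ : 1 ≤ s') (h2 : s' ≤ c),
          IsMDS (a + s') (Matrix.fromCols A
            (Matrix.of fun (i : Fin b ⊕ Fin b) (j : Fin s') => C i (Fin.castLE h2 j)))) ∧
        (c ≤ a → IsMDS (2 * b - a + c) (Matrix.fromCols B C)) := by
  classical
  obtain ⟨A1, B1, C1, hJ1, hJ2, hcondA, hcondB⟩ :=
    Stmt15Aux.mainK (AlgebraicClosure (ZMod p)) a b c ha hab
  -- the set of all entries
  set S : Set (AlgebraicClosure (ZMod p)) :=
    (Set.range fun y : (Fin b ⊕ Fin b) × Fin a => A1 y.1 y.2) ∪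
    ((Set.range fun y : (Fin b ⊕ Fin b) × Fin (2 * b - a) => B1 y.1 y.2) ∪
     (Set.range fun y : (Fin b ⊕ Fin b) × Fin c => C1 y.1 y.2)) with hS
  have hSfin : S.Finite :=
    (Set.finite_range _).union ((Set.finite_range _).union (Set.finite_range _))
  haveI : Finite ↥S := hSfin.to_subtype
  set E := IntermediateField.adjoin (ZMod p) S with hE
  haveI : FiniteDimensional (ZMod p) E :=
    IntermediateField.finiteDimensional_adjoin
      (fun x _ => (Algebra.IsAlgebraic.isAlgebraic x).isIntegral)
  haveI : Finite E := Module.finite_of_finite (ZMod p)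
  haveI : Fintype E := Fintype.ofFinite E
  haveI : CharP E p := charP_of_injective_algebraMap
    (algebraMap (ZMod p) E).injective p
  obtain ⟨n, -, hcard⟩ := FiniteField.card E p
  refine ⟨(n : ℕ), n.2, ?_⟩
  set GF := GaloisField p (n : ℕ) with hGF
  haveI : Finite GF := Module.finite_of_finite (ZMod p)
  haveI : Fintype GF := Fintype.ofFinite GF
  have hGFcard : Fintype.card GF = p ^ (n : ℕ) := by
    have := GaloisField.card p (n : ℕ) (by exact_mod_cast n.2.ne')
    rwa [Nat.card_eq_fintype_card] at this
  haveI : Algebra.IsAlgebraic (ZMod p) GF := Algebra.IsAlgebraic.of_finite (ZMod p) GF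
  set f : GF →ₐ[ZMod p] (AlgebraicClosure (ZMod p)) := IsAlgClosed.lift with hf
  set F : GF →+* (AlgebraicClosure (ZMod p)) := f.toRingHom with hF
  have hfinj : Function.Injective F := F.injective
  set N := p ^ (n : ℕ) with hN
  have hN2 : 2 ≤ N := by
    have h2p := (Fact.out : p.Prime).two_le
    have := Nat.le_self_pow (n := (n : ℕ)) (by exact_mod_cast n.2.ne') p
    omega
  set pol : Polynomial (AlgebraicClosure (ZMod p)) := Polynomial.X ^ N - Polynomial.X with hpol
  have hpoldeg : pol.natDegree = N := by
    rw [hpol]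
    rw [Polynomial.natDegree_sub_eq_left_of_natDegree_lt] <;>
      simp [Polynomial.natDegree_X_pow, Polynomial.natDegree_X] <;> omega
  have hpolne : pol ≠ 0 := by
    intro h0
    rw [h0, Polynomial.natDegree_zero] at hpoldeg
    omega
  have hmem_img : ∀ α : (AlgebraicClosure (ZMod p)), α ^ N = α → ∃ x : GF, F x = α := by
    intro α hα
    have himg_sub : Finset.univ.image (fun x : GF => F x) ⊆ pol.roots.toFinset := by
      intro y hy
      obtain ⟨x, -, rfl⟩ := Finset.mem_image.1 hy
      rw [Multiset.mem_toFinset, Polynomial.mem_roots hpolne]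
      show pol.IsRoot (F x)
      have hx : x ^ N = x := by
        have := FiniteField.pow_card x
        rwa [hGFcard] at this
      simp only [hpol, Polynomial.IsRoot, Polynomial.eval_sub, Polynomial.eval_pow,
        Polynomial.eval_X]
      rw [← map_pow, hx, sub_self]
    have himgcard : (Finset.univ.image (fun x : GF => F x)).card = N := by
      rw [Finset.card_image_of_injective _ hfinj, Finset.card_univ, hGFcard]
    have hrootcard : pol.roots.toFinset.card ≤ N :=
      le_trans (Multiset.toFinset_card_le _)
        (le_trans (Polynomial.card_roots' pol) (le_of_eq hpoldeg))
    have heqset : Finset.univ.image (fun x : GF => F x) = pol.roots.toFinset :=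
      Finset.eq_of_subset_of_card_le himg_sub (by omega)
    have hαroot : α ∈ pol.roots.toFinset := by
      rw [Multiset.mem_toFinset, Polynomial.mem_roots hpolne]
      show pol.IsRoot α
      simp only [hpol, Polynomial.IsRoot, Polynomial.eval_sub, Polynomial.eval_pow,
        Polynomial.eval_X]
      rw [hα, sub_self]
    rw [← heqset] at hαroot
    obtain ⟨x, -, hx⟩ := Finset.mem_image.1 hαroot
    exact ⟨x, hx⟩
  have hfix : ∀ α ∈ S, α ^ N = α := by
    intro α hα
    have hmem : α ∈ E := IntermediateField.subset_adjoin (ZMod p) S hα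
    have hpow := FiniteField.pow_card (⟨α, hmem⟩ : E)
    rw [hcard] at hpow
    have h2 := congrArg (fun x : E => (x : (AlgebraicClosure (ZMod p)))) hpow
    simpa using h2
  have hchoice : ∀ α ∈ S, ∃ x : GF, F x = α := fun α hα => hmem_img α (hfix α hα)
  set g : (AlgebraicClosure (ZMod p)) → GF := fun α => if h : ∃ x : GF, F x = α then h.choose else 0 with hgdef
  have hg : ∀ α : (AlgebraicClosure (ZMod p)), (∃ x : GF, F x = α) → F (g α) = α := by
    intro α h
    simp only [hgdef, dif_pos h]
    exact h.choose_spec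
  set Ag : Matrix (Fin b ⊕ Fin b) (Fin a) GF := fun i j => g (A1 i j) with hAgdef
  set Bg : Matrix (Fin b ⊕ Fin b) (Fin (2 * b - a)) GF := fun i j => g (B1 i j) with hBgdef
  set Cg : Matrix (Fin b ⊕ Fin b) (Fin c) GF := fun i j => g (C1 i j) with hCgdef
  have hAg : ∀ i j, F (Ag i j) = A1 i j := by
    intro i j
    exact hg _ (hchoice _ (by simp only [hS]; exact Or.inl ⟨(i, j), rfl⟩))
  have hBg : ∀ i j, F (Bg i j) = B1 i j := by
    intro i j
    exact hg _ (hchoice _ (by simp only [hS]; exact Or.inr (Or.inl ⟨(i, j), rfl⟩)))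
  have hCg : ∀ i j, F (Cg i j) = C1 i j := by
    intro i j
    exact hg _ (hchoice _ (by simp only [hS]; exact Or.inr (Or.inr ⟨(i, j), rfl⟩)))
  have hAmap : Ag.map F = A1 := by ext i j; exact hAg i j
  have hBmap : Bg.map F = B1 := by ext i j; exact hBg i j
  have hJmap : (sympJ GF b).map F
      = Matrix.fromBlocks (0 : Matrix (Fin b) (Fin b) (AlgebraicClosure (ZMod p)))
          (-1 : Matrix (Fin b) (Fin b) (AlgebraicClosure (ZMod p))) 1 0 := by
    ext x y
    rcases x with i | i <;> rcases y with j | j <;>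
      simp [sympJ, Matrix.map_apply, Matrix.one_apply, Matrix.neg_apply, apply_ite F]
  have hTmapA : (Agᵀ).map F = (Ag.map F)ᵀ := by ext i j; rfl
  refine ⟨Ag, Bg, Cg, ?_, ?_, ?_, ?_, ?_, ?_, ?_⟩
  · ext i j
    apply hfinj
    have h1 : F ((Agᵀ * sympJ GF b * Ag) i j)
        = ((Agᵀ * sympJ GF b * Ag).map F) i j := rfl
    rw [h1, Matrix.map_mul, Matrix.map_mul, hTmapA, hAmap, hJmap, hJ1]
    simp
  · ext i j
    apply hfinj
    have h1 : F ((Agᵀ * sympJ GF b * Bg) i j)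
        = ((Agᵀ * sympJ GF b * Bg).map F) i j := rfl
    rw [h1, Matrix.map_mul, Matrix.map_mul, hTmapA, hAmap, hJmap, hBmap, hJ2]
    simp
  · -- A is MDS
    intro T hT
    apply Stmt15Aux.li_of_comp_injective F
    have h := hcondA 0 (Nat.zero_le c) T (by omega)
    have h2 := Stmt15Aux.li_precomp (Equiv.sumEmpty (Fin a) (Fin 0)).symm h
    have heq : (fun (i : {x // x ∈ T}) => (fun j : Fin a ⊕ Fin 0 =>
          Sum.elim (A1 i.1) (fun jc => C1 i.1 (Fin.castLE (Nat.zero_le c) jc)) j)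
          ∘ (Equiv.sumEmpty (Fin a) (Fin 0)).symm)
        = (fun (i : {x // x ∈ T}) => fun j : Fin a => F (Ag i.1 j)) := by
      funext i j
      show Sum.elim (A1 i.1)
        (fun jc : Fin 0 => C1 i.1 (Fin.castLE (Nat.zero_le c) jc)) (Sum.inl j) = F (Ag i.1 j)
      rw [hAg]
      rfl
    rw [← heq]
    exact h2
  · -- B is MDS
    intro T hT
    apply Stmt15Aux.li_of_comp_injective F
    have h := hcondB 0 (Nat.zero_le c) T (by omega)
    have h2 := Stmt15Aux.li_precomp (Equiv.sumEmpty (Fin (2 * b - a)) (Fin 0)).symm h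
    have heq : (fun (i : {x // x ∈ T}) => (fun j : Fin (2 * b - a) ⊕ Fin 0 =>
          Sum.elim (B1 i.1) (fun jc => C1 i.1 (Fin.castLE (Nat.zero_le c) jc)) j)
          ∘ (Equiv.sumEmpty (Fin (2 * b - a)) (Fin 0)).symm)
        = (fun (i : {x // x ∈ T}) => fun j : Fin (2 * b - a) => F (Bg i.1 j)) := by
      funext i j
      show Sum.elim (B1 i.1)
        (fun jc : Fin 0 => C1 i.1 (Fin.castLE (Nat.zero_le c) jc)) (Sum.inl j) = F (Bg i.1 j)
      rw [hBg]
      rfl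
    rw [← heq]
    exact h2
  · -- (A, C) is MDS
    intro T hT
    apply Stmt15Aux.li_of_comp_injective F
    have h := hcondA c le_rfl T hT
    have heq : (fun (i : {x // x ∈ T}) => fun j : Fin a ⊕ Fin c =>
          Sum.elim (A1 i.1) (fun jc => C1 i.1 (Fin.castLE le_rfl jc)) j)
        = (fun (i : {x // x ∈ T}) => fun j : Fin a ⊕ Fin c =>
            F ((Matrix.fromCols Ag Cg) i.1 j)) := by
      funext i j
      rcases j with jm | jc
      · show A1 i.1 jm = F (Ag i.1 jm)
        rw [hAg]
      · show C1 i.1 (Fin.castLE le_rfl jc) = F (Cg i.1 jc)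
        rw [hCg]
        congr 1
    rw [← heq]
    exact h
  · -- (A, C^{(s')}) is MDS
    intro s' hs1 hs2 T hT
    apply Stmt15Aux.li_of_comp_injective F
    have h := hcondA s' hs2 T hT
    have heq : (fun (i : {x // x ∈ T}) => fun j : Fin a ⊕ Fin s' =>
          Sum.elim (A1 i.1) (fun jc => C1 i.1 (Fin.castLE hs2 jc)) j)
        = (fun (i : {x // x ∈ T}) => fun j : Fin a ⊕ Fin s' =>
            F ((Matrix.fromCols Ag
              (Matrix.of fun (i : Fin b ⊕ Fin b) (j : Fin s') =>
                Cg i (Fin.castLE hs2 j))) i.1 j)) := by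
      funext i j
      rcases j with jm | jc
      · show A1 i.1 jm = F (Ag i.1 jm)
        rw [hAg]
      · show C1 i.1 (Fin.castLE hs2 jc) = F (Cg i.1 (Fin.castLE hs2 jc))
        rw [hCg]
    rw [← heq]
    exact h
  · -- (B, C) is MDS
    intro _ T hT
    apply Stmt15Aux.li_of_comp_injective F
    have h := hcondB c le_rfl T hT
    have heq : (fun (i : {x // x ∈ T}) => fun j : Fin (2 * b - a) ⊕ Fin c =>
          Sum.elim (B1 i.1) (fun jc => C1 i.1 (Fin.castLE le_rfl jc)) j)
        = (fun (i : {x // x ∈ T}) => fun j : Fin (2 * b - a) ⊕ Fin c =>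
            F ((Matrix.fromCols Bg Cg) i.1 j)) := by
      funext i j
      rcases j with jm | jc
      · show B1 i.1 jm = F (Bg i.1 jm)
        rw [hBg]
      · show C1 i.1 (Fin.castLE le_rfl jc) = F (Cg i.1 jc)
        rw [hCg]
        congr 1
    rw [← heq]
    exact h
end

section
/- Let p be a prime and let n ≥ r > t > 0 be integers with r > n/2. Then there exist a positive integer s (with q = p^s), a 2n×n self-column-orthogonal matrix G^(1), a 2n×[2t−n]_+ matrix G^(2), and a 2n×(2r−max(2t,n)) matrix F over 𝔽_q such that (G^(1),G^(2),F) is an (r,t,n)-CQMMSP, where [x]_+ := max(0,x). -/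
open Matrix

/-- Condition (A1): the images of the columns of `P_S F` in the quotient
`𝔽_q^{|S|}/Im(P_S G)` are linearly independent. -/
def accepts {K : Type*} [Field K] {ι ν νF : Type*} (S : Finset ι)
    (G : Matrix ι ν K) (F : Matrix ι νF K) : Prop :=
  LinearIndependent K fun j : νF =>
    (colSpan (rowRestrict S G)).mkQ fun i : {i // i ∈ S} => F i.1 j

/-- Condition (B1): every column of `P_S F` lies in `Im(P_S G)`. -/
def rejects {K : Type*} [Field K] {ι ν νF : Type*} (S : Finset ι)
    (G : Matrix ι ν K) (F : Matrix ι νF K) : Prop :=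
  ∀ j : νF, (fun i : {i // i ∈ S} => F i.1 j) ∈ colSpan (rowRestrict S G)

/-- The symplectic inner product on `𝔽_q^{2n}`:
`((x,y),(x',y')) = Tr(Σ x_i y'_i − Σ x'_i y_i) ∈ 𝔽_p`, where `Tr` is the field
trace of `𝔽_q = GF(p^s)` over `𝔽_p`. -/
noncomputable def sympIP (p s n : ℕ) [Fact p.Prime]
    (u v : Fin n ⊕ Fin n → GaloisField p s) : ZMod p :=
  Algebra.trace (ZMod p) (GaloisField p s)
    (∑ i : Fin n, u (Sum.inl i) * v (Sum.inr i)
      - ∑ i : Fin n, v (Sum.inl i) * u (Sum.inr i))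

section Helpers
open Polynomial

/-- Entry function for the confluent-Vandermonde-style matrix: top block is
`a i ^ d`, bottom block is `lam` times the derivative of `X ^ d` at `a i`. -/
noncomputable def Mfun {K : Type*} [Field K] {n : ℕ} (a : Fin n → K) (lam : K) :
    (Fin n ⊕ Fin n) → ℕ → K := fun i d =>
  Sum.elim (fun i => a i ^ d)
    (fun i => lam * (Polynomial.derivative ((Polynomial.X : Polynomial K) ^ d)).eval (a i)) i

lemma keyLI {K : Type*} [Field K] {n : ℕ} (a : Fin n → K) (ha : Function.Injective a)
    (lam : K) (hlam : lam ≠ 0) (A : Finset (Fin n)) {ι : Type*} [Fintype ι]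
    (deg : ι → ℕ) (hinj : Function.Injective deg) (hbd : ∀ c, deg c < 2 * A.card) :
    LinearIndependent K
      (fun c : ι => fun i : {i // i ∈ A.disjSum A} => Mfun a lam i.1 (deg c)) := by
  classical
  rw [Fintype.linearIndependent_iff]
  intro γ hγ c0
  set f : Polynomial K := ∑ c : ι, Polynomial.C (γ c) * Polynomial.X ^ (deg c) with hf
  have hcoeff : ∀ c, f.coeff (deg c) = γ c := by
    intro c
    rw [hf, Polynomial.finset_sum_coeff]
    rw [Finset.sum_eq_single c]
    · simp
    · intro c' _ hne
      simp [Polynomial.coeff_C_mul, Polynomial.coeff_X_pow,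
        fun h => hne (hinj h)]
      intro h
      exact absurd (hinj h.symm) hne
    · simp
  have heval : ∀ i ∈ A, f.eval (a i) = 0 := by
    intro i hi
    have h1 := congrFun hγ ⟨Sum.inl i, Finset.inl_mem_disjSum.2 hi⟩
    simp only [Finset.sum_apply, Pi.smul_apply, smul_eq_mul, Pi.zero_apply, Mfun,
      Sum.elim_inl] at h1
    rw [hf]
    simp only [Polynomial.eval_finset_sum, Polynomial.eval_mul, Polynomial.eval_C,
      Polynomial.eval_pow, Polynomial.eval_X]
    exact h1
  have hder : ∀ i ∈ A, (Polynomial.derivative f).eval (a i) = 0 := by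
    intro i hi
    have h1 := congrFun hγ ⟨Sum.inr i, Finset.inr_mem_disjSum.2 hi⟩
    simp only [Finset.sum_apply, Pi.smul_apply, smul_eq_mul, Pi.zero_apply, Mfun,
      Sum.elim_inr] at h1
    have h2 : lam * ∑ c : ι, γ c * (Polynomial.derivative ((Polynomial.X : Polynomial K) ^ (deg c))).eval (a i) = 0 := by
      rw [Finset.mul_sum]
      rw [← h1]
      exact Finset.sum_congr rfl fun c _ => by ring
    have h3 := (mul_eq_zero.1 h2).resolve_left hlam
    rw [hf, map_sum]
    simp only [Polynomial.derivative_C_mul, Polynomial.eval_finset_sum, Polynomial.eval_mul,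
      Polynomial.eval_C]
    simpa using h3
  have hf0 : f = 0 := by
    by_contra hne
    have hroot2 : ∀ i ∈ A, ((Polynomial.X : Polynomial K) - Polynomial.C (a i)) ^ 2 ∣ f := by
      intro i hi
      obtain ⟨g, hg⟩ := (Polynomial.dvd_iff_isRoot).2 (heval i hi)
      have hg' : g.eval (a i) = 0 := by
        have hd := hder i hi
        rw [hg] at hd
        simpa using hd
      obtain ⟨h, hh⟩ := (Polynomial.dvd_iff_isRoot).2 hg'
      exact ⟨h, by rw [hg, hh]; ring⟩
    have hcount : ∀ i ∈ A, 2 ≤ f.roots.count (a i) := by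
      intro i hi
      rw [Polynomial.count_roots]
      exact (Polynomial.le_rootMultiplicity_iff hne).2 (hroot2 i hi)
    have hsub : A.image a ⊆ f.roots.toFinset := by
      intro x hx
      obtain ⟨i, hi, rfl⟩ := Finset.mem_image.1 hx
      rw [Multiset.mem_toFinset, ← Multiset.count_pos]
      have := hcount i hi; omega
    have hcard : 2 * A.card ≤ Multiset.card f.roots := by
      calc 2 * A.card = ∑ _x ∈ A.image a, 2 := by
            rw [Finset.sum_const, Finset.card_image_of_injective A ha]; ring
        _ ≤ ∑ x ∈ A.image a, f.roots.count x := by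
            refine Finset.sum_le_sum ?_
            intro x hx
            obtain ⟨i, hi, rfl⟩ := Finset.mem_image.1 hx
            exact hcount i hi
        _ ≤ ∑ x ∈ f.roots.toFinset, f.roots.count x :=
            Finset.sum_le_sum_of_subset hsub
        _ = Multiset.card f.roots := Multiset.toFinset_sum_count_eq _
    have hA1 : 1 ≤ A.card := by have := hbd c0; omega
    have hdeg : f.natDegree ≤ 2 * A.card - 1 := by
      refine Polynomial.natDegree_sum_le_of_forall_le _ _ ?_
      intro c _
      refine le_trans (Polynomial.natDegree_C_mul_X_pow_le _ _) ?_
      have := hbd c; omega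
    have := Polynomial.card_roots' f
    omega
  have := hcoeff c0
  rw [hf0] at this
  simpa using this.symm

/-- The `ZMod p`-linear map recording all trace constraints `Tr(λ·S j j')`. -/
noncomputable def Phi (p : ℕ) [Fact p.Prime] (s n : ℕ)
    (S : Fin n → Fin n → GaloisField p s) :
    GaloisField p s →ₗ[ZMod p] (Fin n → Fin n → ZMod p) where
  toFun lam := fun j j' => Algebra.trace (ZMod p) (GaloisField p s) (lam * S j j')
  map_add' x y := by funext j j'; simp [add_mul]
  map_smul' c x := by funext j j'; simp [smul_mul_assoc]

lemma exists_lam (p : ℕ) [Fact p.Prime] (s n : ℕ) (hs : s ≠ 0) (hsn : n * n < s)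
    (S : Fin n → Fin n → GaloisField p s) :
    ∃ lam : GaloisField p s, lam ≠ 0 ∧
      ∀ j j', Algebra.trace (ZMod p) (GaloisField p s) (lam * S j j') = 0 := by
  set Φ := Phi p s n S with hΦ
  have hrank := LinearMap.finrank_range_add_finrank_ker Φ
  have h1 : Module.finrank (ZMod p) (GaloisField p s) = s := GaloisField.finrank p hs
  have h2 : Module.finrank (ZMod p) (LinearMap.range Φ) ≤ n * n := by
    refine le_trans (Submodule.finrank_le _) ?_
    rw [Module.finrank_pi_fintype]
    simp [Module.finrank_fintype_fun_eq_card]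
  have hker : 0 < Module.finrank (ZMod p) (LinearMap.ker Φ) := by omega
  have hbot : LinearMap.ker Φ ≠ ⊥ := by
    intro h
    rw [h] at hker
    simp at hker
  obtain ⟨lam, hmem, hne⟩ := Submodule.exists_mem_ne_zero_of_ne_bot hbot
  refine ⟨lam, hne, fun j j' => ?_⟩
  have : Φ lam = 0 := hmem
  exact congrFun (congrFun this j) j'

end Helpers

/-- for a prime `p` and integers `n ≥ r > t > 0` with `r > n/2`,
there exist `s > 0` (with `q = p^s`), a `2n×n` self-column-orthogonal matrix
`G⁽¹⁾`, a `2n×[2t−n]_+` matrix `G⁽²⁾`, and a `2n×(2r−max(2t,n))` matrix `F` over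
`𝔽_q` such that `(G⁽¹⁾,G⁽²⁾,F)` is an `(r,t,n)`-CQMMSP, i.e. `((G⁽¹⁾,G⁽²⁾),F)` is
an `(𝔄̄_r, 𝔅̄_t)`-MMSP with respect to the symplectifications `Ā = A ∪ (A+n)`. -/


theorem stmt16 (p : ℕ) [Fact p.Prime] (n r t : ℕ)
    (ht : 0 < t) (htr : t < r) (hrn : r ≤ n) (hhalf : n < 2 * r) :
    ∃ s : ℕ, 0 < s ∧
      ∃ (G1 : Matrix (Fin n ⊕ Fin n) (Fin n) (GaloisField p s))
        (G2 : Matrix (Fin n ⊕ Fin n) (Fin (2 * t - n)) (GaloisField p s))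
        (F : Matrix (Fin n ⊕ Fin n) (Fin (2 * r - max (2 * t) n)) (GaloisField p s)),
        -- `G⁽¹⁾` is self-column-orthogonal
        (∀ j j' : Fin n,
          sympIP p s n (fun i => G1 i j) (fun i => G1 i j') = 0) ∧
        -- acceptance of `𝔄̄_r`
        (∀ A : Finset (Fin n), r ≤ A.card →
          accepts (A.disjSum A) (Matrix.fromCols G1 G2) F) ∧
        -- rejection of `𝔅̄_t`
        (∀ B : Finset (Fin n), B.card ≤ t →
          rejects (B.disjSum B) (Matrix.fromCols G1 G2) F) := by
  classical
  have hn : 0 < n := lt_of_lt_of_le (lt_trans ht htr) hrn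
  refine ⟨n * n + 1, Nat.succ_pos _, ?_⟩
  set s : ℕ := n * n + 1 with hs
  set K := GaloisField p s with hK
  haveI : Fintype K := Fintype.ofFinite _
  have hcard : n ≤ Fintype.card K := by
    have h1 : Nat.card K = p ^ s := GaloisField.card p s (by omega)
    have h2 : 2 ≤ p := (Fact.out : p.Prime).two_le
    have h3 : 2 ^ s ≤ p ^ s := Nat.pow_le_pow_left h2 s
    have h4 : s < 2 ^ s := Nat.lt_two_pow_self
    have h5 : n ≤ s := by nlinarith
    rw [← Nat.card_eq_fintype_card, h1]
    omega
  obtain ⟨a⟩ : Nonempty (Fin n ↪ K) :=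
    Function.Embedding.nonempty_iff_card_le.2 (by simpa using hcard)
  set S : Fin n → Fin n → K := fun j j' =>
    ∑ i : Fin n,
      ((a i) ^ (j : ℕ) *
          (Polynomial.derivative ((Polynomial.X : Polynomial K) ^ (j' : ℕ))).eval (a i)
        - (a i) ^ (j' : ℕ) *
          (Polynomial.derivative ((Polynomial.X : Polynomial K) ^ (j : ℕ))).eval (a i))
    with hS
  obtain ⟨lam, hlam0, hlamtr⟩ := exists_lam p s n (by omega) (by omega) S
  have hnm : n + (2 * t - n) = max (2 * t) n := by omega
  have htot : n + (2 * t - n) + (2 * r - max (2 * t) n) = 2 * r := by omega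
  set G1 : Matrix (Fin n ⊕ Fin n) (Fin n) K :=
    Matrix.of fun i j => Mfun a lam i (j : ℕ) with hG1
  set G2 : Matrix (Fin n ⊕ Fin n) (Fin (2 * t - n)) K :=
    Matrix.of fun i j => Mfun a lam i (n + (j : ℕ)) with hG2
  set F : Matrix (Fin n ⊕ Fin n) (Fin (2 * r - max (2 * t) n)) K :=
    Matrix.of fun i j => Mfun a lam i (n + (2 * t - n) + (j : ℕ)) with hF
  have hcols : ∀ (i : Fin n ⊕ Fin n) (k : Fin n ⊕ Fin (2 * t - n)),
      (Matrix.fromCols G1 G2) i k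
        = Mfun a lam i (Sum.elim (fun j : Fin n => (j : ℕ))
            (fun j : Fin (2 * t - n) => n + (j : ℕ)) k) := by
    rintro i (k | k) <;>
      simp [hG1, hG2, Matrix.fromCols_apply_inl, Matrix.fromCols_apply_inr]
  refine ⟨G1, G2, F, ?_, ?_, ?_⟩
  · -- self-orthogonality
    intro j j'
    unfold sympIP
    have harg :
        (∑ i : Fin n, G1 (Sum.inl i) j * G1 (Sum.inr i) j')
          - (∑ i : Fin n, G1 (Sum.inl i) j' * G1 (Sum.inr i) j)
          = lam * S j j' := by
      rw [hS, Finset.mul_sum, ← Finset.sum_sub_distrib]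
      refine Finset.sum_congr rfl fun i _ => ?_
      simp only [hG1, Matrix.of_apply, Mfun, Sum.elim_inl, Sum.elim_inr]
      ring
    rw [harg]
    exact hlamtr j j'
  · -- accepts
    intro A hA
    unfold accepts
    rw [Fintype.linearIndependent_iff]
    intro γ hγ j0
    have hmem : (∑ j, γ j • fun i : {i // i ∈ A.disjSum A} => F i.1 j)
        ∈ colSpan (rowRestrict (A.disjSum A) (Matrix.fromCols G1 G2)) := by
      rw [← Submodule.Quotient.mk_eq_zero, ← Submodule.mkQ_apply, map_sum]
      simpa only [_root_.map_smul] using hγ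
    rw [colSpan, Submodule.mem_span_range_iff_exists_fun] at hmem
    obtain ⟨d, hd⟩ := hmem
    set deg : (Fin n ⊕ Fin (2 * t - n)) ⊕ Fin (2 * r - max (2 * t) n) → ℕ :=
      Sum.elim (Sum.elim (fun j : Fin n => (j : ℕ))
          (fun j : Fin (2 * t - n) => n + (j : ℕ)))
        (fun j : Fin (2 * r - max (2 * t) n) => n + (2 * t - n) + (j : ℕ)) with hdeg
    have hinj : Function.Injective deg := by
      rintro ((u | u) | u) ((v | v) | v) h <;>
        simp only [hdeg, Sum.elim_inl, Sum.elim_inr] at h <;>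
        first
          | (congr 1 <;> [skip] <;> skip)
          | skip
      all_goals
        first
          | (have hu := u.isLt; have hv := v.isLt;
             congr 1 <;> first | (congr 1; exact Fin.ext (by omega)) | exact Fin.ext (by omega))
          | (exfalso; have hu := u.isLt; have hv := v.isLt; omega)
    have hbd : ∀ c, deg c < 2 * A.card := by
      rintro ((u | u) | u) <;>
        simp only [hdeg, Sum.elim_inl, Sum.elim_inr] <;>
        (have hu := u.isLt; omega)
    have hLI := Fintype.linearIndependent_iff.1
      (keyLI a a.injective lam hlam0 A deg hinj hbd)
    have hzero := hLI (Sum.elim d fun j => -γ j) ?_ (Sum.inr j0)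
    · simpa using hzero
    · funext i
      have hdi := congrFun hd i
      simp only [Finset.sum_apply, Pi.smul_apply, smul_eq_mul, rowRestrict,
        Matrix.of_apply, hcols, hF, Fintype.sum_sum_type, Sum.elim_inl,
        Sum.elim_inr] at hdi
      simp only [Finset.sum_apply, Pi.smul_apply, Pi.zero_apply, smul_eq_mul,
        Fintype.sum_sum_type, hdeg, Sum.elim_inl, Sum.elim_inr, hF, Matrix.of_apply]
      rw [hdi]
      rw [← Finset.sum_add_distrib]
      exact Finset.sum_eq_zero fun x _ => by ring
  · -- rejects
    intro B hB
    have htop : colSpan (rowRestrict (B.disjSum B) (Matrix.fromCols G1 G2)) = ⊤ := by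
      have hLI := keyLI a a.injective lam hlam0 B
        (fun c : Fin (2 * B.card) => (c : ℕ)) Fin.val_injective
        (fun c => c.isLt)
      have hcardeq : Fintype.card (Fin (2 * B.card))
          = Module.finrank K ({i // i ∈ B.disjSum B} → K) := by
        rw [Module.finrank_fintype_fun_eq_card]
        simp [Finset.card_disjSum, two_mul]
      have hspan := hLI.span_eq_top_of_card_eq_finrank' hcardeq
      rw [eq_top_iff, ← hspan, colSpan]
      refine Submodule.span_le.2 ?_
      rintro _ ⟨c, rfl⟩
      have hc2 : (c : ℕ) < n + (2 * t - n) := by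
        have := c.isLt; omega
      by_cases hcn : (c : ℕ) < n
      · refine Submodule.subset_span ⟨Sum.inl (⟨(c : ℕ), hcn⟩ : Fin n), ?_⟩
        funext i
        simp [rowRestrict, hcols]
      · refine Submodule.subset_span
          ⟨Sum.inr (⟨(c : ℕ) - n, by omega⟩ : Fin (2 * t - n)), ?_⟩
        funext i
        have hcc : n + ((c : ℕ) - n) = (c : ℕ) := by omega
        simp [rowRestrict, hcols, hcc]
    intro j
    rw [htop]
    trivial
end

section
/- Let p be a prime and let r,t,n,y₁ be positive integers with n ≥ r > t ≥ y₁/2 > 0. Then there exist a positive integer s (with q = p^s), a 2n×y₁ self-column-orthogonal matrix G^(1), a 2n×(2t−y₁) matrix G^(2), and a 2n×(2r−2t) matrix F over 𝔽_q such that (G^(1),G^(2),F) is an (r,t,n)-EAMMSP. -/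
open Matrix

section AuxLemmas
open Polynomial

-- Frobenius as an AlgEquiv over ZMod p
noncomputable def frobAlgEquiv (p s : ℕ) [Fact p.Prime] :
    GaloisField p s ≃ₐ[ZMod p] GaloisField p s :=
  AlgEquiv.ofBijective
    { toRingHom := frobenius (GaloisField p s) p
      commutes' := fun c => by
        simp only [RingHom.toMonoidHom_eq_coe, OneHom.toFun_eq_coe, MonoidHom.toOneHom_coe,
          MonoidHom.coe_coe, frobenius_def]
        rw [← map_pow, ZMod.pow_card] }
    (Finite.injective_iff_bijective.mp (frobenius (GaloisField p s) p).injective)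

lemma frobAlgEquiv_apply (p s : ℕ) [Fact p.Prime] (x : GaloisField p s) :
    frobAlgEquiv p s x = x ^ p := rfl

lemma trace_frob_pow (p s : ℕ) [Fact p.Prime] (m : ℕ) (x : GaloisField p s) :
    Algebra.trace (ZMod p) (GaloisField p s) (x ^ p ^ m) =
      Algebra.trace (ZMod p) (GaloisField p s) x := by
  induction m with
  | zero => simp
  | succ m ih =>
      have h1 : x ^ p ^ (m + 1) = (frobAlgEquiv p s) (x ^ p ^ m) := by
        rw [frobAlgEquiv_apply, ← pow_mul, pow_succ]
      rw [h1, Algebra.trace_eq_of_algEquiv, ih]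

/-- Linear independence of Vandermonde-type columns. -/
lemma cols_linearIndependent {K : Type*} [Field K] {ι κ : Type*} [Fintype κ]
    (S : Finset ι) (x : ι → K) (hx : Function.Injective x)
    (e : κ → ℕ) (he : Function.Injective e) {N : ℕ} (heN : ∀ k, e k < N)
    (hcard : N ≤ S.card) :
    LinearIndependent K (fun k : κ => fun i : {i // i ∈ S} => x i.1 ^ e k) := by
  classical
  rw [Fintype.linearIndependent_iff]
  intro a ha k
  set P : K[X] := ∑ k' : κ, Polynomial.C (a k') * Polynomial.X ^ e k' with hP
  have hev : ∀ i : {i // i ∈ S}, P.eval (x i.1) = 0 := by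
    intro i
    have h := congrFun ha i
    simpa [hP, Polynomial.eval_finset_sum] using h
  have hxS : Function.Injective (fun i : {i // i ∈ S} => x i.1) :=
    fun a b h => Subtype.ext (hx h)
  have hdeg : P.natDegree < N := by
    have : P.natDegree ≤ N - 1 := by
      apply Polynomial.natDegree_sum_le_of_forall_le
      intro k' _
      refine le_trans (Polynomial.natDegree_C_mul_le _ _) ?_
      rw [Polynomial.natDegree_X_pow]
      have := heN k'
      omega
    have hN : 0 < N := (heN k).trans_le' (Nat.zero_le _)
    omega
  have hP0 : P = 0 :=
    Polynomial.eq_zero_of_natDegree_lt_card_of_eval_eq_zero P hxS hev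
      (by rw [Fintype.card_coe]; omega)
  have : P.coeff (e k) = a k := by
    rw [hP, Polynomial.finset_sum_coeff]
    have : ∀ k' : κ, (Polynomial.C (a k') * Polynomial.X ^ e k').coeff (e k)
        = if k' = k then a k' else 0 := by
      intro k'
      rw [Polynomial.coeff_C_mul, Polynomial.coeff_X_pow]
      by_cases h : k' = k
      · subst h; simp
      · have : e k ≠ e k' := fun hh => h (he hh.symm)
        simp [this, h]
    rw [Finset.sum_congr rfl fun k' _ => this k']
    simp
  rw [hP0] at this
  simpa using this.symm

/-- Every vector is in the span of full Vandermonde columns (rejection). -/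
lemma mem_span_pow_cols {K : Type*} [Field K] {ι ν : Type*} [Fintype ν]
    (S : Finset ι) (x : ι → K) (hx : Function.Injective x)
    (e : ν → ℕ) {N : ℕ} (hN : 0 < N) (hsec : ∀ d, d < N → ∃ k, e k = d)
    (hcard : S.card ≤ N) (w : {i // i ∈ S} → K) :
    w ∈ Submodule.span K (Set.range fun k : ν => fun i : {i // i ∈ S} => x i.1 ^ e k) := by
  classical
  set v : {i // i ∈ S} → K := fun i => x i.1 with hv
  have hvinj : Set.InjOn v (Finset.univ : Finset {i // i ∈ S}) :=
    fun a _ b _ h => Subtype.ext (hx h)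
  set P := Lagrange.interpolate Finset.univ v w with hPdef
  have hdeg : P.degree < (Finset.univ : Finset {i // i ∈ S}).card :=
    Lagrange.degree_interpolate_lt w hvinj
  have hnd : P.natDegree < N := by
    by_cases h0 : P = 0
    · simpa [h0]
    · have := (Polynomial.natDegree_lt_iff_degree_lt h0).mpr hdeg
      calc P.natDegree < (Finset.univ : Finset {i // i ∈ S}).card := this
        _ = S.card := by simp [Finset.card_univ, Fintype.card_coe]
        _ ≤ N := hcard
  have hev : ∀ i : {i // i ∈ S}, w i = ∑ d ∈ Finset.range N, P.coeff d * v i ^ d := by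
    intro i
    rw [← Lagrange.eval_interpolate_at_node w hvinj (Finset.mem_univ i)]
    exact Polynomial.eval_eq_sum_range' hnd (v i)
  choose σ hσ using hsec
  have hw : w = ∑ d ∈ Finset.range N, P.coeff d • (fun i : {i // i ∈ S} => x i.1 ^ d) := by
    funext i
    rw [hev i]
    simp [Finset.sum_apply, hv]
  rw [hw]
  apply Submodule.sum_mem
  intro d hd
  apply Submodule.smul_mem
  apply Submodule.subset_span
  refine ⟨σ d (Finset.mem_range.mp hd), ?_⟩
  have h1 : e (σ d (Finset.mem_range.mp hd)) = d := hσ d (Finset.mem_range.mp hd)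
  funext i
  simp only [h1]

/-- Acceptance from linear independence of combined columns. -/
lemma accepts_of_li {K : Type*} [Field K] {ι ν νF : Type*} [Fintype ν] [Fintype νF]
    (S : Finset ι) (G : Matrix ι ν K) (F : Matrix ι νF K)
    (h : LinearIndependent K (Sum.elim (fun j : ν => fun i : {i // i ∈ S} => G i.1 j)
        (fun j : νF => fun i : {i // i ∈ S} => F i.1 j))) :
    accepts S G F := by
  classical
  rw [accepts, Fintype.linearIndependent_iff]
  intro a ha j
  have hmk : (colSpan (rowRestrict S G)).mkQ (∑ j', a j' • fun i : {i // i ∈ S} => F i.1 j') = 0 := by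
    rw [map_sum]
    simpa [_root_.map_smul] using ha
  have hmem : (∑ j', a j' • fun i : {i // i ∈ S} => F i.1 j') ∈ colSpan (rowRestrict S G) := by
    rwa [Submodule.mkQ_apply, Submodule.Quotient.mk_eq_zero] at hmk
  rw [colSpan, Submodule.mem_span_range_iff_exists_fun] at hmem
  obtain ⟨c, hc⟩ := hmem
  have hzero : ∑ k : ν ⊕ νF, (Sum.elim c (fun j' => -a j')) k •
      (Sum.elim (fun j : ν => fun i : {i // i ∈ S} => G i.1 j)
        (fun j : νF => fun i : {i // i ∈ S} => F i.1 j)) k = 0 := by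
    rw [Fintype.sum_sum_type]
    simp only [Sum.elim_inl, Sum.elim_inr, neg_smul, Finset.sum_neg_distrib]
    have hc' : (∑ i : ν, c i • fun i1 : {i // i ∈ S} => G i1.1 i)
        = ∑ j' : νF, a j' • fun i : {i // i ∈ S} => F i.1 j' := hc
    rw [hc']
    simp
  have := Fintype.linearIndependent_iff.mp h _ hzero (Sum.inr j)
  simpa using this

end AuxLemmas

/-- for a prime `p` and positive integers `r,t,n,y₁` with
`n ≥ r > t ≥ y₁/2 > 0`, there exist `s > 0` (with `q = p^s`), a `2n×y₁`
self-column-orthogonal matrix `G⁽¹⁾`, a `2n×(2t−y₁)` matrix `G⁽²⁾`, and a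
`2n×(2r−2t)` matrix `F` over `𝔽_q` such that `(G⁽¹⁾,G⁽²⁾,F)` is an
`(r,t,n)`-EAMMSP, i.e. `((G⁽¹⁾,G⁽²⁾),F)` is an `(𝔄̄_r, 𝔅̄_t)`-MMSP with respect
to the symplectifications `Ā = A ∪ (A+n)`. -/
theorem stmt17 (p : ℕ) [Fact p.Prime] (n r t y₁ : ℕ)
    (hy : 0 < y₁) (hty : y₁ ≤ 2 * t) (htr : t < r) (hrn : r ≤ n) :
    ∃ s : ℕ, 0 < s ∧
      ∃ (G1 : Matrix (Fin n ⊕ Fin n) (Fin y₁) (GaloisField p s))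
        (G2 : Matrix (Fin n ⊕ Fin n) (Fin (2 * t - y₁)) (GaloisField p s))
        (F : Matrix (Fin n ⊕ Fin n) (Fin (2 * r - 2 * t)) (GaloisField p s)),
        -- `G⁽¹⁾` is self-column-orthogonal
        (∀ j j' : Fin y₁,
          sympIP p s n (fun i => G1 i j) (fun i => G1 i j') = 0) ∧
        -- acceptance of `𝔄̄_r`
        (∀ A : Finset (Fin n), r ≤ A.card →
          accepts (A.disjSum A) (Matrix.fromCols G1 G2) F) ∧
        -- rejection of `𝔅̄_t`
        (∀ B : Finset (Fin n), B.card ≤ t →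
          rejects (B.disjSum B) (Matrix.fromCols G1 G2) F) := by
  classical
  have hp2 : 2 ≤ p := (Fact.out : p.Prime).two_le
  set m : ℕ := n + 1 with hm
  refine ⟨m + m, by omega, ?_⟩
  have hs0 : (m + m) ≠ 0 := by omega
  letI : Fintype (GaloisField p (m + m)) := Fintype.ofFinite _
  have hcardK : Fintype.card (GaloisField p (m + m)) = p ^ (m + m) := by
    rw [← Nat.card_eq_fintype_card, GaloisField.card p (m + m) hs0]
  have hnq : n < p ^ m := by
    calc n < 2 ^ n := Nat.lt_two_pow_self
    _ ≤ 2 ^ m := Nat.pow_le_pow_right (by omega) (by omega)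
    _ ≤ p ^ m := Nat.pow_le_pow_left hp2 m
  have h2q : 2 ≤ p ^ m := by
    calc 2 = 2 ^ 1 := rfl
    _ ≤ 2 ^ m := Nat.pow_le_pow_right (by omega) (by omega)
    _ ≤ p ^ m := Nat.pow_le_pow_left hp2 m
  have hps : p ^ (m + m) = p ^ m * p ^ m := pow_add p m m
  -- generator of the unit group
  obtain ⟨g, hg⟩ := IsCyclic.exists_generator (α := (GaloisField p (m + m))ˣ)
  have horder : orderOf g = p ^ (m + m) - 1 := by
    have h1 : Nat.card ((GaloisField p (m + m))ˣ) = p ^ (m + m) - 1 := by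
      rw [Nat.card_units (GaloisField p (m + m)), Nat.card_eq_fintype_card, hcardK]
    rw [orderOf_eq_card_of_forall_mem_zpowers hg, ← h1]
  -- exponents
  set E : Fin n ⊕ Fin n → ℕ :=
    Sum.elim (fun i => i.1 + 1) (fun i => (i.1 + 1) * p ^ m) with hE
  have hBA : p ^ m * 2 ≤ p ^ (m + m) := by
    rw [hps]; exact Nat.mul_le_mul_left _ h2q
  have hmulbound : ∀ i : Fin n, (i.1 + 1) * p ^ m ≤ p ^ (m + m) - p ^ m := by
    intro i
    have h1 : (i.1 + 1) * p ^ m ≤ (p ^ m - 1) * p ^ m :=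
      Nat.mul_le_mul_right _ (by have := i.2; omega)
    have h2 : (p ^ m - 1) * p ^ m = p ^ (m + m) - p ^ m := by
      rw [hps, Nat.sub_mul, one_mul]
    omega
  have hElt : ∀ z, E z < p ^ (m + m) - 1 := by
    rintro (i | i) <;> simp only [hE, Sum.elim_inl, Sum.elim_inr]
    · have := i.2; omega
    · have := hmulbound i; omega
  have hEinj : Function.Injective E := by
    have hge : ∀ i : Fin n, p ^ m ≤ (i.1 + 1) * p ^ m :=
      fun i => Nat.le_mul_of_pos_left _ (by omega)
    rintro (i | i) (i' | i') h <;>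
      simp only [hE, Sum.elim_inl, Sum.elim_inr] at h
    · exact congrArg Sum.inl (Fin.ext (by omega))
    · exfalso; have := hge i'; have := i.2; omega
    · exfalso; have := hge i; have := i'.2; omega
    · have := Nat.eq_of_mul_eq_mul_right (show 0 < p ^ m by omega) h
      exact congrArg Sum.inr (Fin.ext (by omega))
  -- the nodes
  set x : Fin n ⊕ Fin n → GaloisField p (m + m) := fun z => (g : GaloisField p (m + m)) ^ E z
    with hx
  have hxinj : Function.Injective x := by
    intro z z' h
    apply hEinj
    have h' : g ^ E z = g ^ E z' := by
      apply Units.ext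
      rwa [Units.val_pow_eq_pow_val, Units.val_pow_eq_pow_val]
    exact pow_injOn_Iio_orderOf (by rw [horder]; exact hElt z)
      (by rw [horder]; exact hElt z') h'
  -- matrices
  set G1 : Matrix (Fin n ⊕ Fin n) (Fin y₁) (GaloisField p (m + m)) :=
    Matrix.of fun i j => x i ^ (j : ℕ) with hG1
  set G2 : Matrix (Fin n ⊕ Fin n) (Fin (2 * t - y₁)) (GaloisField p (m + m)) :=
    Matrix.of fun i j => x i ^ (y₁ + (j : ℕ)) with hG2
  set F : Matrix (Fin n ⊕ Fin n) (Fin (2 * r - 2 * t)) (GaloisField p (m + m)) :=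
    Matrix.of fun i j => x i ^ (2 * t + (j : ℕ)) with hF
  refine ⟨G1, G2, F, ?_, ?_, ?_⟩
  · -- symplectic self-orthogonality
    intro j j'
    set α : Fin n → GaloisField p (m + m) := fun i => (g : GaloisField p (m + m)) ^ (i.1 + 1)
      with hα
    have hxl : ∀ i : Fin n, x (Sum.inl i) = α i := fun i => rfl
    have hxr : ∀ i : Fin n, x (Sum.inr i) = α i ^ p ^ m := by
      intro i
      simp only [hx, hE, hα, Sum.elim_inr, pow_mul]
    have hpowq : ∀ y : GaloisField p (m + m), (y ^ p ^ m) ^ p ^ m = y := by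
      intro y
      rw [← pow_mul, ← hps, ← hcardK, FiniteField.pow_card]
    have key : (∑ i : Fin n, α i ^ (j : ℕ) * (α i ^ (j' : ℕ)) ^ p ^ m) ^ p ^ m
        = ∑ i : Fin n, α i ^ (j' : ℕ) * (α i ^ (j : ℕ)) ^ p ^ m := by
      rw [sum_pow_char_pow]
      refine Finset.sum_congr rfl fun i _ => ?_
      rw [mul_pow, hpowq, mul_comm]
    simp only [sympIP, hG1, Matrix.of_apply]
    have e1 : ∀ i : Fin n, x (Sum.inl i) ^ (j : ℕ) * x (Sum.inr i) ^ (j' : ℕ)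
        = α i ^ (j : ℕ) * (α i ^ (j' : ℕ)) ^ p ^ m := by
      intro i; rw [hxl, hxr]
      exact congrArg (α i ^ (j : ℕ) * ·) (pow_right_comm (α i) (p ^ m) (j' : ℕ))
    have e2 : ∀ i : Fin n, x (Sum.inl i) ^ (j' : ℕ) * x (Sum.inr i) ^ (j : ℕ)
        = α i ^ (j' : ℕ) * (α i ^ (j : ℕ)) ^ p ^ m := by
      intro i; rw [hxl, hxr]
      exact congrArg (α i ^ (j' : ℕ) * ·) (pow_right_comm (α i) (p ^ m) (j : ℕ))
    rw [Finset.sum_congr rfl fun i _ => e1 i, Finset.sum_congr rfl fun i _ => e2 i,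
      ← key, map_sub, trace_frob_pow, sub_self]
  · -- acceptance
    intro A hA
    apply accepts_of_li
    set e : (Fin y₁ ⊕ Fin (2 * t - y₁)) ⊕ Fin (2 * r - 2 * t) → ℕ :=
      Sum.elim (Sum.elim (fun j => (j : ℕ)) (fun j => y₁ + (j : ℕ)))
        (fun j => 2 * t + (j : ℕ)) with he
    have hfam : (Sum.elim
        (fun j : Fin y₁ ⊕ Fin (2 * t - y₁) =>
          fun i : {i // i ∈ A.disjSum A} => (Matrix.fromCols G1 G2) i.1 j)
        (fun j : Fin (2 * r - 2 * t) =>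
          fun i : {i // i ∈ A.disjSum A} => F i.1 j))
        = fun k => fun i : {i // i ∈ A.disjSum A} => x i.1 ^ e k := by
      funext k
      rcases k with (j | j) | j <;> rfl
    rw [hfam]
    apply cols_linearIndependent (A.disjSum A) x hxinj e ?_ (N := 2 * r) ?_ ?_
    · rintro ((j | j) | j) ((j' | j') | j') h <;>
        simp only [he, Sum.elim_inl, Sum.elim_inr] at h <;>
        [skip; skip; skip; skip; skip; skip; skip; skip; skip] <;>
        first
          | (exact congrArg (Sum.inl ∘ Sum.inl) (Fin.ext (by omega)))
          | (exact congrArg (Sum.inl ∘ Sum.inr) (Fin.ext (by omega)))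
          | (exact congrArg Sum.inr (Fin.ext (by omega)))
          | (exfalso; have := j.2; have := j'.2; omega)
    · rintro ((j | j) | j) <;> simp only [he, Sum.elim_inl, Sum.elim_inr] <;>
        have := j.2 <;> omega
    · rw [Finset.card_disjSum]; omega
  · -- rejection
    intro B hB j
    set e : Fin y₁ ⊕ Fin (2 * t - y₁) → ℕ :=
      Sum.elim (fun j => (j : ℕ)) (fun j => y₁ + (j : ℕ)) with he
    have hfun : (fun k : Fin y₁ ⊕ Fin (2 * t - y₁) =>
        fun i : {i // i ∈ B.disjSum B} =>
          (rowRestrict (B.disjSum B) (Matrix.fromCols G1 G2)) i k)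
        = fun k => fun i : {i // i ∈ B.disjSum B} => x i.1 ^ e k := by
      funext k
      rcases k with j' | j' <;> rfl
    show (fun i : {i // i ∈ B.disjSum B} => F i.1 j) ∈ colSpan _
    rw [colSpan, hfun]
    apply mem_span_pow_cols (B.disjSum B) x hxinj e (N := 2 * t) (by omega) ?_ ?_
    · intro d hd
      by_cases hdy : d < y₁
      · exact ⟨Sum.inl ⟨d, hdy⟩, rfl⟩
      · refine ⟨Sum.inr ⟨d - y₁, by omega⟩, ?_⟩
        simp only [he, Sum.elim_inr]
        omega
    · rw [Finset.card_disjSum]; omega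
end
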